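/- arXiv:2104.02235 — 11 statements merged into one kernel-verified Lean document; each statement's English description precedes it below -/
import Mathlib

section
/- Let Q ⊆ A × B × C × D satisfy (P1) and (P2) under all partitions of coordinates into two pairs. Every function in the family 𝓕 of fibers of Q (as functions A → B) is a bijection from A to B. -/
/-- If `Q ⊆ A × B × C × D` satisfies (P1) and (P2) (for all partitions of
the four coordinates into two pairs), then every function in the family `𝓕` of fibers
of `Q` (as functions `A → B`) is a bijection. -/
theorem statement2 {A B C D : Type*} (Q : A → B → C → D → Prop)
    (hP1a : ∀ a b c, ∃! e, Q a b c e)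
    (hP1b : ∀ a b e, ∃! c, Q a b c e)
    (hP1c : ∀ a c e, ∃! b, Q a b c e)
    (hP1d : ∀ b c e, ∃! a, Q a b c e)
    -- (P2) for the partition {1,2} | {3,4}
    (hP2a : ∀ (a : A) (b : B) (a' : A) (b' : B) (c : C) (e : D) (c' : C) (e' : D),
      Q a b c e → Q a b c' e' → Q a' b' c e → Q a' b' c' e')
    -- (P2) for the partition {1,3} | {2,4}
    (hP2b : ∀ (a : A) (c : C) (a' : A) (c' : C) (b : B) (e : D) (b' : B) (e' : D),
      Q a b c e → Q a b' c e' → Q a' b c' e → Q a' b' c' e')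
    -- (P2) for the partition {1,4} | {2,3}
    (hP2c : ∀ (a : A) (e : D) (a' : A) (e' : D) (b : B) (c : C) (b' : B) (c' : C),
      Q a b c e → Q a b' c' e → Q a' b c e' → Q a' b' c' e') :
    ∀ f : A → B, (∃ (c : C) (e : D), ∀ (x : A) (y : B), f x = y ↔ Q x y c e) →
      Function.Bijective f := by
  rintro f ⟨c, e, hf⟩
  constructor
  · intro x x' hxx'
    exact (hP1d (f x') c e).unique ((hf x (f x')).mp hxx') ((hf x' (f x')).mp rfl)
  · intro y
    obtain ⟨a, ha, -⟩ := hP1d y c e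
    exact ⟨a, (hf a y).mpr ha⟩
end

section
/- Let Q ⊆ A × B × C × D satisfy (P1) and (P2). Let 𝓕 be the family of bijections A → B given by fibers of Q over C × D, and 𝓖 the family of bijections C → D given by fibers of Q over A × B. For every f ∈ 𝓕 and every (x,u) ∈ A × C there exists a unique g ∈ 𝓖 such that (x, f(x), u, g(u)) ∈ Q; moreover this g satisfies (x', f(x'), u', g(u')) ∈ Q for all (x',u') ∈ A × C. -/
/-- With `Q` satisfying (P1) and (P2), `𝓕` the family of bijections
`A → B` given by fibers of `Q` over `C × D`, and `𝓖` the family of bijections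
`C → D` given by fibers of `Q` over `A × B`: for every `f ∈ 𝓕` and `(x,u) ∈ A × C`
there is a unique `g ∈ 𝓖` with `(x, f x, u, g u) ∈ Q`, and moreover this `g`
satisfies `(x', f x', u', g u') ∈ Q` for all `(x',u') ∈ A × C`. -/
theorem statement3 {A B C D : Type*} (Q : A → B → C → D → Prop)
    (hP1a : ∀ a b c, ∃! e, Q a b c e)
    (hP1b : ∀ a b e, ∃! c, Q a b c e)
    (hP1c : ∀ a c e, ∃! b, Q a b c e)
    (hP1d : ∀ b c e, ∃! a, Q a b c e)
    (hP2a : ∀ (a : A) (b : B) (a' : A) (b' : B) (c : C) (e : D) (c' : C) (e' : D),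
      Q a b c e → Q a b c' e' → Q a' b' c e → Q a' b' c' e')
    (hP2b : ∀ (a : A) (c : C) (a' : A) (c' : C) (b : B) (e : D) (b' : B) (e' : D),
      Q a b c e → Q a b' c e' → Q a' b c' e → Q a' b' c' e')
    (hP2c : ∀ (a : A) (e : D) (a' : A) (e' : D) (b : B) (c : C) (b' : B) (c' : C),
      Q a b c e → Q a b' c' e → Q a' b c e' → Q a' b' c' e') :
    ∀ f : A → B, (∃ (c : C) (e : D), ∀ (x : A) (y : B), f x = y ↔ Q x y c e) →
    ∀ (x : A) (u : C), ∃ g : C → D,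
      ((∃ (a : A) (b : B), ∀ (v : C) (w : D), g v = w ↔ Q a b v w) ∧
        Q x (f x) u (g u) ∧ ∀ (x' : A) (u' : C), Q x' (f x') u' (g u')) ∧
      ∀ g' : C → D, (∃ (a : A) (b : B), ∀ (v : C) (w : D), g' v = w ↔ Q a b v w) →
        Q x (f x) u (g' u) → g' = g := by
  rintro f ⟨c, e, hf⟩ x u
  set g : C → D := fun v => (hP1a x (f x) v).choose with hg
  have hgspec : ∀ v, Q x (f x) v (g v) := fun v => (hP1a x (f x) v).choose_spec.1
  have hgiff : ∀ (v : C) (w : D), g v = w ↔ Q x (f x) v w := by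
    intro v w
    constructor
    · rintro rfl; exact hgspec v
    · intro h; exact ((hP1a x (f x) v).choose_spec.2 w h).symm
  have hfcx : ∀ x' : A, Q x' (f x') c e := fun x' => (hf x' (f x')).mp rfl
  have hall : ∀ (x' : A) (u' : C), Q x' (f x') u' (g u') := by
    intro x' u'
    exact hP2a x (f x) x' (f x') c e u' (g u') (hfcx x) (hgspec u') (hfcx x')
  refine ⟨g, ⟨⟨x, f x, hgiff⟩, hgspec u, hall⟩, ?_⟩
  rintro g' ⟨a, b, hg'⟩ hqu
  funext v
  have hu : Q a b u (g' u) := (hg' u (g' u)).mp rfl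
  have hv : Q a b v (g v) :=
    hP2a x (f x) a b u (g' u) v (g v)
      hqu (hgspec v) hu
  exact (hg' v (g v)).mpr hv
end

section
/- Let Q ⊆ A × B × C × D satisfy (P1) and (P2), and let 𝓕 be the family of bijections A → B given by fibers of Q. Then 𝓕 is closed under the ternary operation (f₁,f₂,f₃) ↦ f₃ ∘ f₂⁻¹ ∘ f₁: for any f₁, f₂, f₃ ∈ 𝓕, the composition f₃ ∘ f₂⁻¹ ∘ f₁ belongs to 𝓕. -/
/-- With `Q` satisfying (P1) and (P2) and `𝓕` the family of bijections
`A → B` given by fibers of `Q`, the family `𝓕` is closed under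
`(f₁,f₂,f₃) ↦ f₃ ∘ f₂⁻¹ ∘ f₁` (where `g₂` is a two-sided inverse of `f₂`). -/
theorem statement4 {A B C D : Type*} (Q : A → B → C → D → Prop)
    (hP1a : ∀ a b c, ∃! e, Q a b c e)
    (hP1b : ∀ a b e, ∃! c, Q a b c e)
    (hP1c : ∀ a c e, ∃! b, Q a b c e)
    (hP1d : ∀ b c e, ∃! a, Q a b c e)
    (hP2a : ∀ (a : A) (b : B) (a' : A) (b' : B) (c : C) (e : D) (c' : C) (e' : D),
      Q a b c e → Q a b c' e' → Q a' b' c e → Q a' b' c' e')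
    (hP2b : ∀ (a : A) (c : C) (a' : A) (c' : C) (b : B) (e : D) (b' : B) (e' : D),
      Q a b c e → Q a b' c e' → Q a' b c' e → Q a' b' c' e')
    (hP2c : ∀ (a : A) (e : D) (a' : A) (e' : D) (b : B) (c : C) (b' : B) (c' : C),
      Q a b c e → Q a b' c' e → Q a' b c e' → Q a' b' c' e') :
    ∀ (f₁ f₂ f₃ : A → B) (g₂ : B → A),
      (∃ (c : C) (e : D), ∀ (x : A) (y : B), f₁ x = y ↔ Q x y c e) →
      (∃ (c : C) (e : D), ∀ (x : A) (y : B), f₂ x = y ↔ Q x y c e) →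
      (∃ (c : C) (e : D), ∀ (x : A) (y : B), f₃ x = y ↔ Q x y c e) →
      (∀ a : A, g₂ (f₂ a) = a) → (∀ b : B, f₂ (g₂ b) = b) →
      ∃ (c : C) (e : D), ∀ (x : A) (y : B), (f₃ ∘ g₂ ∘ f₁) x = y ↔ Q x y c e := by
  rintro f₁ f₂ f₃ g₂ ⟨c₁, e₁, h₁⟩ ⟨c₂, e₂, h₂⟩ ⟨c₃, e₃, h₃⟩ hg₁ hg₂
  by_cases hA : Nonempty A
  · obtain ⟨a₀⟩ := hA
    set b' := f₁ a₀ with hb'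
    set m := g₂ b' with hm
    set b₀ := f₃ m with hb₀def
    obtain ⟨c₄, hc₄, _⟩ := hP1b a₀ b₀ e₃
    obtain ⟨es, hes, _⟩ := hP1a a₀ b' c₂
    obtain ⟨c₆, hc₆, _⟩ := hP1b m b₀ e₂
    have F1 : Q a₀ b' c₁ e₁ := (h₁ a₀ b').mp rfl
    have F2 : Q m b' c₂ e₂ := (h₂ m b').mp (hg₂ b')
    have F3 : Q m b₀ c₃ e₃ := (h₃ m b₀).mp rfl
    refine ⟨c₄, e₃, fun x y => ?_⟩
    have key : Q x ((f₃ ∘ g₂ ∘ f₁) x) c₄ e₃ := by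
      set b := f₁ x with hb
      set z := g₂ b with hz
      set yy := f₃ z with hyy
      obtain ⟨b₂, hb₂, _⟩ := hP1c z c₃ e₂
      have F5 : Q x b c₁ e₁ := (h₁ x b).mp rfl
      have F6 : Q z b c₂ e₂ := (h₂ z b).mp (hg₂ b)
      have F7 : Q z yy c₃ e₃ := (h₃ z yy).mp rfl
      have S1 : Q x b c₂ es := hP2a a₀ b' x b c₁ e₁ c₂ es F1 hes F5
      have S2 : Q x b₂ c₃ es := hP2c z e₂ x es b c₂ b₂ c₃ F6 hb₂ S1
      have S4 : Q z yy c₆ e₂ := hP2a m b₀ z yy c₃ e₃ c₆ e₂ F3 hc₆ F7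
      have S5 : Q x yy c₆ es := hP2c z e₂ x es b₂ c₃ yy c₆ hb₂ S4 S2
      have S6 : Q a₀ b₀ c₆ es := hP2c m e₂ a₀ es b' c₂ b₀ c₆ F2 hc₆ hes
      exact hP2a a₀ b₀ x yy c₆ es c₄ e₃ S6 hc₄ S5
    constructor
    · rintro rfl; exact key
    · intro hQ
      obtain ⟨bb, _, hbu⟩ := hP1c x c₄ e₃
      exact ((hbu _ key).trans (hbu y hQ).symm)
  · exact ⟨c₁, e₁, fun x _ => absurd ⟨x⟩ hA⟩
end

section
/- Let Q ⊆ A × B × C × D satisfy (P1) and (P2), and let 𝓕 be the family of bijections A → B given by fibers of Q. Then for any f₁, f₂, f₃ ∈ 𝓕 one has f₃ ∘ f₂⁻¹ ∘ f₁ = f₁ ∘ f₂⁻¹ ∘ f₃. -/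
/-- With `Q` satisfying (P1) and (P2) and `𝓕` the family of bijections
`A → B` given by fibers of `Q`: for any `f₁, f₂, f₃ ∈ 𝓕`,
`f₃ ∘ f₂⁻¹ ∘ f₁ = f₁ ∘ f₂⁻¹ ∘ f₃` (where `g₂` is a two-sided inverse of `f₂`). -/
theorem statement5 {A B C D : Type*} (Q : A → B → C → D → Prop)
    (hP1a : ∀ a b c, ∃! e, Q a b c e)
    (hP1b : ∀ a b e, ∃! c, Q a b c e)
    (hP1c : ∀ a c e, ∃! b, Q a b c e)
    (hP1d : ∀ b c e, ∃! a, Q a b c e)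
    (hP2a : ∀ (a : A) (b : B) (a' : A) (b' : B) (c : C) (e : D) (c' : C) (e' : D),
      Q a b c e → Q a b c' e' → Q a' b' c e → Q a' b' c' e')
    (hP2b : ∀ (a : A) (c : C) (a' : A) (c' : C) (b : B) (e : D) (b' : B) (e' : D),
      Q a b c e → Q a b' c e' → Q a' b c' e → Q a' b' c' e')
    (hP2c : ∀ (a : A) (e : D) (a' : A) (e' : D) (b : B) (c : C) (b' : B) (c' : C),
      Q a b c e → Q a b' c' e → Q a' b c e' → Q a' b' c' e') :
    ∀ (f₁ f₂ f₃ : A → B) (g₂ : B → A),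
      (∃ (c : C) (e : D), ∀ (x : A) (y : B), f₁ x = y ↔ Q x y c e) →
      (∃ (c : C) (e : D), ∀ (x : A) (y : B), f₂ x = y ↔ Q x y c e) →
      (∃ (c : C) (e : D), ∀ (x : A) (y : B), f₃ x = y ↔ Q x y c e) →
      (∀ a : A, g₂ (f₂ a) = a) → (∀ b : B, f₂ (g₂ b) = b) →
      f₃ ∘ g₂ ∘ f₁ = f₁ ∘ g₂ ∘ f₃ := by
  rintro f₁ f₂ f₃ g₂ ⟨c₁, e₁, h₁⟩ ⟨c₂, e₂, h₂⟩ ⟨c₃, e₃, h₃⟩ hgf hfg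
  funext x
  simp only [Function.comp_apply]
  -- notation
  set y₁ := f₁ x with hy₁
  set y₃ := f₃ x with hy₃
  set a := g₂ y₁ with ha
  set b := g₂ y₃ with hb
  set w := f₁ b with hw
  set z := f₃ a with hz
  -- basic facts
  have F1 : Q x y₁ c₁ e₁ := (h₁ x y₁).mp rfl
  have F2 : Q x y₃ c₃ e₃ := (h₃ x y₃).mp rfl
  have F3 : Q a y₁ c₂ e₂ := (h₂ a y₁).mp (hfg y₁)
  have F4 : Q b y₃ c₂ e₂ := (h₂ b y₃).mp (hfg y₃)
  have F5 : Q a z c₃ e₃ := (h₃ a z).mp rfl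
  have F6 : Q b w c₁ e₁ := (h₁ b w).mp rfl
  -- auxiliary element d₂ with Q x y₁ c₂ d₂
  obtain ⟨d₂, F10, -⟩ := hP1a x y₁ c₂
  -- transport (b, w) onto the fiber (c₂, d₂)
  have F7 : Q b w c₂ d₂ := hP2a x y₁ b w c₁ e₁ c₂ d₂ F1 F10 F6
  -- auxiliary element c' with Q a y₃ c' e₂
  obtain ⟨c', Fc, -⟩ := hP1b a y₃ e₂
  -- (a, w) lies on fiber (c', d₂)
  have F9 : Q a w c' d₂ := hP2b b c₂ a c' y₃ e₂ w d₂ F4 F7 Fc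
  -- (x, y₃) lies on fiber (c', d₂)
  have F11 : Q x y₃ c' d₂ := hP2c a e₂ x d₂ y₁ c₂ y₃ c' F3 Fc F10
  -- hence (a, w) lies on fiber (c₃, e₃)
  have Fgoal : Q a w c₃ e₃ := hP2a x y₃ a w c' d₂ c₃ e₃ F11 F2 F9
  -- uniqueness gives z = w
  obtain ⟨u, hu, huniq⟩ := hP1c a c₃ e₃
  exact (huniq z F5).trans (huniq w Fgoal).symm
end

section
/- Let Q ⊆ A × B × C × D satisfy (P1) and (P2), let 𝓕 be the family of bijections A → B given by fibers of Q, and fix f₀ ∈ 𝓕. Define f + f' := f ∘ f₀⁻¹ ∘ f' for f, f' ∈ 𝓕. Then (𝓕, +) is an abelian group with identity element f₀, where the inverse of f is f₀ ∘ f⁻¹ ∘ f₀. -/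
/-- Transfer lemma: if `(x,b)`, `(x₀,b₀)` lie on the fiber `(c₁,e₁)`, `(a',b)`,
`(a₀,b₀)` on `(c₂,e₂)`, `(a',y)`, `(a₀,y₀)` on `(c₃,e₃)`, and `(x₀,y₀)` lies on
`(γ,δ)`, then `(x,y)` lies on `(γ,δ)` too. -/
theorem statement6_aux_key {A B C D : Type*} (Q : A → B → C → D → Prop)
    (hP1a : ∀ a b c, ∃! e, Q a b c e)
    (hP1b : ∀ a b e, ∃! c, Q a b c e)
    (hP2a : ∀ (a : A) (b : B) (a' : A) (b' : B) (c : C) (e : D) (c' : C) (e' : D),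
      Q a b c e → Q a b c' e' → Q a' b' c e → Q a' b' c' e')
    (hP2c : ∀ (a : A) (e : D) (a' : A) (e' : D) (b : B) (c : C) (b' : B) (c' : C),
      Q a b c e → Q a b' c' e → Q a' b c e' → Q a' b' c' e')
    {x x₀ a' a₀ : A} {b b₀ y y₀ : B} {c₁ c₂ c₃ γ : C} {e₁ e₂ e₃ δ : D}
    (F1 : Q x b c₁ e₁) (F2 : Q x₀ b₀ c₁ e₁) (F3 : Q a' b c₂ e₂)
    (F4 : Q a₀ b₀ c₂ e₂) (F5 : Q a' y c₃ e₃) (F6 : Q a₀ y₀ c₃ e₃)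
    (Fb : Q x₀ y₀ γ δ) : Q x y γ δ := by
  obtain ⟨e₄, he₄, -⟩ := hP1a x b c₂
  obtain ⟨c₄, hc₄, -⟩ := hP1b a' y e₂
  have S3 : Q x y c₄ e₄ := hP2c a' e₂ x e₄ b c₂ y c₄ F3 hc₄ he₄
  have S1₀ : Q x₀ b₀ c₂ e₄ := hP2a x b x₀ b₀ c₁ e₁ c₂ e₄ F1 he₄ F2
  have S2₀ : Q a₀ y₀ c₄ e₂ := hP2a a' y a₀ y₀ c₃ e₃ c₄ e₂ F5 hc₄ F6
  have S3₀ : Q x₀ y₀ c₄ e₄ := hP2c a₀ e₂ x₀ e₄ b₀ c₂ y₀ c₄ F4 S2₀ S1₀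
  exact hP2a x₀ y₀ x y c₄ e₄ γ δ S3₀ Fb S3

/-- Symmetry (Thomsen) lemma: the composite of fiber bijections is symmetric. -/
theorem statement6_aux_sym {A B C D : Type*} (Q : A → B → C → D → Prop)
    (hP1a : ∀ a b c, ∃! e, Q a b c e)
    (hP1b : ∀ a b e, ∃! c, Q a b c e)
    (hP1c : ∀ a c e, ∃! b, Q a b c e)
    (hP2a : ∀ (a : A) (b : B) (a' : A) (b' : B) (c : C) (e : D) (c' : C) (e' : D),
      Q a b c e → Q a b c' e' → Q a' b' c e → Q a' b' c' e')
    (hP2b : ∀ (a : A) (c : C) (a' : A) (c' : C) (b : B) (e : D) (b' : B) (e' : D),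
      Q a b c e → Q a b' c e' → Q a' b c' e → Q a' b' c' e')
    (hP2c : ∀ (a : A) (e : D) (a' : A) (e' : D) (b : B) (c : C) (b' : B) (c' : C),
      Q a b c e → Q a b' c' e → Q a' b c e' → Q a' b' c' e')
    {x a a₂ : A} {b b₂ y z : B} {c₁ c₂ c₃ : C} {e₁ e₂ e₃ : D}
    (G1 : Q x b c₁ e₁) (G2 : Q a b c₂ e₂) (G3 : Q a y c₃ e₃)
    (G4 : Q x b₂ c₃ e₃) (G5 : Q a₂ b₂ c₂ e₂) (G6 : Q a₂ z c₁ e₁) : y = z := by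
  obtain ⟨e₆, he₆, -⟩ := hP1a a₂ z c₃
  obtain ⟨c₆, hc₆, -⟩ := hP1b a b e₃
  have S3 : Q x b c₃ e₆ := hP2a a₂ z x b c₁ e₁ c₃ e₆ G6 he₆ G1
  have S4 : Q a₂ b₂ c₆ e₃ := hP2a a b a₂ b₂ c₂ e₂ c₆ e₃ G2 hc₆ G5
  have S2 : Q a₂ b c₆ e₆ := hP2b x c₃ a₂ c₆ b₂ e₃ b e₆ G4 S3 S4
  have S5 : Q a z c₃ e₃ := hP2c a₂ e₆ a e₃ b c₆ z c₃ S2 he₆ hc₆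
  exact (hP1c a c₃ e₃).unique G3 S5

/-- Closure lemma: `f₃ ∘ g₂ ∘ f₁` is again a fiber of `Q`, whenever `f₁, f₃` are
fibers and `g₂` is a right inverse of a fiber over `(c₂, e₂)`. -/
theorem statement6_aux_closure {A B C D : Type*} (Q : A → B → C → D → Prop)
    (hP1a : ∀ a b c, ∃! e, Q a b c e)
    (hP1b : ∀ a b e, ∃! c, Q a b c e)
    (hP1c : ∀ a c e, ∃! b, Q a b c e)
    (hP2a : ∀ (a : A) (b : B) (a' : A) (b' : B) (c : C) (e : D) (c' : C) (e' : D),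
      Q a b c e → Q a b c' e' → Q a' b' c e → Q a' b' c' e')
    (hP2c : ∀ (a : A) (e : D) (a' : A) (e' : D) (b : B) (c : C) (b' : B) (c' : C),
      Q a b c e → Q a b' c' e → Q a' b c e' → Q a' b' c' e')
    (f₁ f₃ : A → B) (g₂ : B → A) {c₁ c₂ c₃ : C} {e₁ e₂ e₃ : D}
    (h1 : ∀ x y, f₁ x = y ↔ Q x y c₁ e₁)
    (h3 : ∀ x y, f₃ x = y ↔ Q x y c₃ e₃)
    (h2 : ∀ b : B, Q (g₂ b) b c₂ e₂) :
    ∃ (c : C) (e : D), ∀ (x : A) (y : B), (f₃ ∘ g₂ ∘ f₁) x = y ↔ Q x y c e := by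
  rcases isEmpty_or_nonempty A with hA | ⟨⟨x₀⟩⟩
  · exact ⟨c₁, e₁, fun x => isEmptyElim x⟩
  · obtain ⟨ε, hε, -⟩ := hP1a x₀ (f₃ (g₂ (f₁ x₀))) c₁
    have hkey : ∀ x : A, Q x ((f₃ ∘ g₂ ∘ f₁) x) c₁ ε := by
      intro x
      exact statement6_aux_key Q hP1a hP1b hP2a hP2c
        ((h1 x (f₁ x)).mp rfl) ((h1 x₀ (f₁ x₀)).mp rfl)
        (h2 (f₁ x)) (h2 (f₁ x₀))
        ((h3 (g₂ (f₁ x)) (f₃ (g₂ (f₁ x)))).mp rfl)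
        ((h3 (g₂ (f₁ x₀)) (f₃ (g₂ (f₁ x₀)))).mp rfl) hε
    refine ⟨c₁, ε, fun x y => ⟨fun h => h ▸ hkey x, fun h => ?_⟩⟩
    exact (hP1c x c₁ ε).unique (hkey x) h

/-- With `Q` satisfying (P1) and (P2), `𝓕` the family of bijections
`A → B` given by fibers of `Q`, a fixed `f₀ ∈ 𝓕` with two-sided inverse `g₀`, and
`f + f' := f ∘ g₀ ∘ f'`, the family `(𝓕, +)` is an abelian group with identity `f₀`,
where the inverse of `f` (with two-sided inverse `gf`) is `f₀ ∘ gf ∘ f₀`. -/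
theorem statement6 {A B C D : Type*} (Q : A → B → C → D → Prop)
    (hP1a : ∀ a b c, ∃! e, Q a b c e)
    (hP1b : ∀ a b e, ∃! c, Q a b c e)
    (hP1c : ∀ a c e, ∃! b, Q a b c e)
    (hP1d : ∀ b c e, ∃! a, Q a b c e)
    (hP2a : ∀ (a : A) (b : B) (a' : A) (b' : B) (c : C) (e : D) (c' : C) (e' : D),
      Q a b c e → Q a b c' e' → Q a' b' c e → Q a' b' c' e')
    (hP2b : ∀ (a : A) (c : C) (a' : A) (c' : C) (b : B) (e : D) (b' : B) (e' : D),
      Q a b c e → Q a b' c e' → Q a' b c' e → Q a' b' c' e')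
    (hP2c : ∀ (a : A) (e : D) (a' : A) (e' : D) (b : B) (c : C) (b' : B) (c' : C),
      Q a b c e → Q a b' c' e → Q a' b c e' → Q a' b' c' e')
    (f₀ : A → B) (g₀ : B → A)
    (hf₀ : ∃ (c : C) (e : D), ∀ (x : A) (y : B), f₀ x = y ↔ Q x y c e)
    (hg₀l : ∀ a : A, g₀ (f₀ a) = a) (hg₀r : ∀ b : B, f₀ (g₀ b) = b) :
    -- closure under `+`
    (∀ f f' : A → B,
      (∃ (c : C) (e : D), ∀ (x : A) (y : B), f x = y ↔ Q x y c e) →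
      (∃ (c : C) (e : D), ∀ (x : A) (y : B), f' x = y ↔ Q x y c e) →
      ∃ (c : C) (e : D), ∀ (x : A) (y : B), (f ∘ g₀ ∘ f') x = y ↔ Q x y c e) ∧
    -- associativity
    (∀ f f' f'' : A → B,
      ((f ∘ g₀ ∘ f') ∘ g₀ ∘ f'') = (f ∘ g₀ ∘ (f' ∘ g₀ ∘ f''))) ∧
    -- `f₀` is a two-sided identity
    (∀ f : A → B, (∃ (c : C) (e : D), ∀ (x : A) (y : B), f x = y ↔ Q x y c e) →
      (f ∘ g₀ ∘ f₀) = f ∧ (f₀ ∘ g₀ ∘ f) = f) ∧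
    -- inverses
    (∀ (f : A → B) (gf : B → A),
      (∃ (c : C) (e : D), ∀ (x : A) (y : B), f x = y ↔ Q x y c e) →
      (∀ a : A, gf (f a) = a) → (∀ b : B, f (gf b) = b) →
      (∃ (c : C) (e : D), ∀ (x : A) (y : B), (f₀ ∘ gf ∘ f₀) x = y ↔ Q x y c e) ∧
      (f ∘ g₀ ∘ (f₀ ∘ gf ∘ f₀)) = f₀ ∧ ((f₀ ∘ gf ∘ f₀) ∘ g₀ ∘ f) = f₀) ∧
    -- commutativity
    (∀ f f' : A → B,
      (∃ (c : C) (e : D), ∀ (x : A) (y : B), f x = y ↔ Q x y c e) →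
      (∃ (c : C) (e : D), ∀ (x : A) (y : B), f' x = y ↔ Q x y c e) →
      (f ∘ g₀ ∘ f') = (f' ∘ g₀ ∘ f)) := by
  obtain ⟨c₀, e₀, hQ₀⟩ := hf₀
  have h2₀ : ∀ b : B, Q (g₀ b) b c₀ e₀ := fun b => (hQ₀ (g₀ b) b).mp (hg₀r b)
  refine ⟨?_, ?_, ?_, ?_, ?_⟩
  · -- closure
    rintro f f' ⟨c, e, hf⟩ ⟨c', e', hf'⟩
    exact statement6_aux_closure Q hP1a hP1b hP1c hP2a hP2c f' f g₀ hf' hf h2₀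
  · -- associativity
    intro f f' f''
    rfl
  · -- identity
    rintro f ⟨c, e, hf⟩
    constructor
    · funext x
      show f (g₀ (f₀ x)) = f x
      rw [hg₀l]
    · funext x
      show f₀ (g₀ (f x)) = f x
      rw [hg₀r]
  · -- inverses
    rintro f gf ⟨c, e, hf⟩ hgfl hgfr
    have h2f : ∀ b : B, Q (gf b) b c e := fun b => (hf (gf b) b).mp (hgfr b)
    refine ⟨statement6_aux_closure Q hP1a hP1b hP1c hP2a hP2c f₀ f₀ gf hQ₀ hQ₀ h2f,
      ?_, ?_⟩
    · funext x
      show f (g₀ (f₀ (gf (f₀ x)))) = f₀ x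
      rw [hg₀l, hgfr]
    · funext x
      show f₀ (gf (f₀ (g₀ (f x)))) = f₀ x
      rw [hg₀r, hgfl]
  · -- commutativity
    rintro f f' ⟨c, e, hf⟩ ⟨c', e', hf'⟩
    funext x
    show f (g₀ (f' x)) = f' (g₀ (f x))
    exact statement6_aux_sym Q hP1a hP1b hP1c hP2a hP2b hP2c
      ((hf' x (f' x)).mp rfl) (h2₀ (f' x))
      ((hf (g₀ (f' x)) (f (g₀ (f' x)))).mp rfl)
      ((hf x (f x)).mp rfl) (h2₀ (f x))
      ((hf' (g₀ (f x)) (f' (g₀ (f x)))).mp rfl)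
end

section
/- Let m ≥ 4 and let Q ⊆ X₁ × ⋯ × Xₘ satisfy (P1) and (P2). Let 𝓕 be the set of functions X₁ → X₂ whose graph is given by {(x₁,x₂) : Q(x₁,x₂,b₃,…,bₘ)} for some (b₃,…,bₘ) ∈ X₃ × ⋯ × Xₘ. Then for every choice of cᵢ ∈ Xᵢ for 4 ≤ i ≤ m and every f ∈ 𝓕, there exists c₃ ∈ X₃ such that {(x₁,x₂) : Q(x₁,x₂,c₃,c₄,…,cₘ)} is the graph of f. -/
universe u

/-- Let `m ≥ 4` and `Q ⊆ X₁ × ⋯ × Xₘ` satisfy (P1) and (P2). Let `𝓕` be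
the set of functions `X₁ → X₂` whose graph is `{(x₁,x₂) : Q(x₁,x₂,b₃,…,bₘ)}` for some
`(b₃,…,bₘ)`. Then for every choice of `cᵢ ∈ Xᵢ` (for `4 ≤ i ≤ m`) and every `f ∈ 𝓕`
there is `c₃ ∈ X₃` such that `{(x₁,x₂) : Q(x₁,x₂,c₃,c₄,…,cₘ)}` is the graph of `f`.
Coordinates `1,2,3` are represented by `i₀, i₁, i₂ : Fin m` with values `0,1,2`. -/
theorem statement8 {m : ℕ} (hm : 4 ≤ m) {X : Fin m → Type u}
    (Q : (∀ i, X i) → Prop)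
    (i₀ i₁ i₂ : Fin m) (h₀ : (i₀ : ℕ) = 0) (h₁ : (i₁ : ℕ) = 1) (h₂ : (i₂ : ℕ) = 2)
    (hP1 : ∀ (i : Fin m) (a : ∀ j, X j), ∃! x : X i, Q (Function.update a i x))
    (hP2 : ∀ (i j : Fin m), i ≠ j → ∀ (a b a' b' : ∀ k, X k),
      (∀ k, (k = i ∨ k = j) → a k = b k) →
      (∀ k, (k = i ∨ k = j) → a' k = b' k) →
      (∀ k, k ≠ i → k ≠ j → a' k = a k) →
      (∀ k, k ≠ i → k ≠ j → b' k = b k) →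
      Q a → Q b → Q a' → Q b') :
    ∀ (c : ∀ k, X k) (f : X i₀ → X i₁),
      (∃ b : ∀ k, X k, ∀ a : ∀ k, X k,
        (∀ k, k ≠ i₀ → k ≠ i₁ → a k = b k) → (Q a ↔ f (a i₀) = a i₁)) →
      ∃ c₃ : X i₂, ∀ a : ∀ k, X k,
        a i₂ = c₃ → (∀ k, k ≠ i₀ → k ≠ i₁ → k ≠ i₂ → a k = c k) →
        (Q a ↔ f (a i₀) = a i₁) := by
  rintro c f ⟨b, hb⟩
  have h01 : i₀ ≠ i₁ := fun h => by rw [h, h₁] at h₀; omega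
  have h02 : i₀ ≠ i₂ := fun h => by rw [h, h₂] at h₀; omega
  have h12 : i₁ ≠ i₂ := fun h => by rw [h, h₂] at h₁; omega
  -- base tuple: c with coordinates i₀, i₁ set to (b i₀, f (b i₀))
  set d₀ : ∀ k, X k :=
    Function.update (Function.update c i₀ (b i₀)) i₁ (f (b i₀)) with hd₀
  obtain ⟨c₃, hc₃, _⟩ := hP1 i₂ d₀
  refine ⟨c₃, ?_⟩
  set d : ∀ k, X k := Function.update d₀ i₂ c₃ with hd
  have hQd : Q d := hc₃
  have hdi₀ : d i₀ = b i₀ := by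
    simp [hd, hd₀, Function.update_of_ne h02, Function.update_of_ne h01]
  have hdi₁ : d i₁ = f (b i₀) := by
    simp [hd, hd₀, Function.update_of_ne h12]
  have hdi₂ : d i₂ = c₃ := by simp [hd]
  have hdoff : ∀ k, k ≠ i₀ → k ≠ i₁ → k ≠ i₂ → d k = c k := by
    intro k hk0 hk1 hk2
    simp [hd, hd₀, Function.update_of_ne hk2, Function.update_of_ne hk1,
      Function.update_of_ne hk0]
  -- B : point (b i₀, f (b i₀)) on the graph with background b
  set B : ∀ k, X k := Function.update b i₁ (f (b i₀)) with hB
  have hQB : Q B := by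
    rw [hb B (fun k _ hk1 => Function.update_of_ne hk1 _ _)]
    rw [hB]
    rw [Function.update_of_ne (Ne.symm h01).symm, Function.update_self]
  -- key lemma: any tuple with background (c₃, c) on the graph of f satisfies Q
  have key : ∀ a : ∀ k, X k, a i₂ = c₃ →
      (∀ k, k ≠ i₀ → k ≠ i₁ → k ≠ i₂ → a k = c k) → f (a i₀) = a i₁ → Q a := by
    intro a ha2 hac hfa
    -- A : point (a i₀, f (a i₀)) on graph of f with background b
    set A : ∀ k, X k :=
      Function.update (Function.update b i₀ (a i₀)) i₁ (f (a i₀)) with hA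
    have hAi₀ : A i₀ = a i₀ := by
      rw [hA, Function.update_of_ne h01, Function.update_self]
    have hAi₁ : A i₁ = f (a i₀) := by rw [hA, Function.update_self]
    have hQA : Q A := by
      rw [hb A (fun k hk0 hk1 => by
        rw [hA, Function.update_of_ne hk1, Function.update_of_ne hk0])]
      rw [hAi₀, hAi₁]
    refine hP2 i₀ i₁ h01 B d A a ?_ ?_ ?_ ?_ hQB hQd hQA
    · rintro k (rfl | rfl)
      · rw [hB, Function.update_of_ne (Ne.symm h01).symm, hdi₀]
      · rw [hB, Function.update_self, hdi₁]
    · rintro k (rfl | rfl)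
      · rw [hAi₀]
      · rw [hAi₁, hfa]
    · intro k hk0 hk1
      rw [hA, hB, Function.update_of_ne hk1, Function.update_of_ne hk1,
        Function.update_of_ne hk0]
    · intro k hk0 hk1
      by_cases hk2 : k = i₂
      · subst hk2; rw [ha2, hdi₂]
      · rw [hac k hk0 hk1 hk2, hdoff k hk0 hk1 hk2]
  intro a ha2 hac
  constructor
  · intro hQa
    -- uniqueness at coordinate i₁
    obtain ⟨x, _, hxu⟩ := hP1 i₁ a
    have h1 : a i₁ = x := by
      apply hxu
      rwa [Function.update_eq_self]
    have h2 : f (a i₀) = x := by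
      apply hxu
      have := key (Function.update a i₁ (f (a i₀)))
        (by rw [Function.update_of_ne (Ne.symm h12), ha2])
        (fun k hk0 hk1 hk2 => by
          rw [Function.update_of_ne hk1, hac k hk0 hk1 hk2])
        (by rw [Function.update_of_ne (Ne.symm h01).symm, Function.update_self])
      exact this
    rw [h2, h1]
  · exact key a ha2 hac
end

section
/- Kővári–Sós–Turán bound: if E ⊆ A × B is K_{d,ν}-free (contains no complete bipartite subgraph with d vertices on the A-side and ν vertices on the B-side), where d, ν ≥ 1 and A, B are finite, then |E| ≤ ν^{1/d} |A| |B|^{1−1/d} + d|B|. -/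
open Finset

/-- Kővári–Sós–Turán: if `E ⊆ A × B` is `K_{d,ν}`-free with `d, ν ≥ 1`
and `A, B` finite, then `|E| ≤ ν^{1/d} |A| |B|^{1−1/d} + d |B|`. -/
theorem statement9 {α β : Type*} (d ν : ℕ) (hd : 1 ≤ d) (hν : 1 ≤ ν)
    (A : Finset α) (B : Finset β) (E : Finset (α × β)) (hE : E ⊆ A ×ˢ B)
    (hfree : ¬ ∃ (A' : Finset α) (B' : Finset β),
      A' ⊆ A ∧ B' ⊆ B ∧ A'.card = d ∧ B'.card = ν ∧ A' ×ˢ B' ⊆ E) :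
    (E.card : ℝ) ≤ (ν : ℝ) ^ ((1 : ℝ) / d) * (A.card : ℝ) *
      (B.card : ℝ) ^ (1 - (1 : ℝ) / d) + (d : ℝ) * (B.card : ℝ) := by
  classical
  rcases B.eq_empty_or_nonempty with rfl | hB
  · have hE0 : E = ∅ := Finset.subset_empty.1 (by simpa using hE)
    simp only [hE0, Finset.card_empty, Finset.card_empty, Nat.cast_zero, mul_zero, add_zero]
    positivity
  have hd0 : (d : ℝ) ≠ 0 := Nat.cast_ne_zero.2 (by omega)
  -- neighborhoods
  set N : β → Finset α := fun b => (E.filter fun p => p.2 = b).image Prod.fst with hN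
  have hNmem : ∀ a b, a ∈ N b ↔ (a, b) ∈ E := by
    intro a b
    simp only [hN, mem_image, mem_filter, Prod.exists]
    constructor
    · rintro ⟨x, y, ⟨hxy, rfl⟩, rfl⟩; exact hxy
    · intro h; exact ⟨a, b, ⟨h, rfl⟩, rfl⟩
  have hNsub : ∀ b, N b ⊆ A := fun b a ha =>
    (Finset.mem_product.1 (hE ((hNmem a b).1 ha))).1
  have hcardN : ∀ b, (N b).card = (E.filter fun p => p.2 = b).card := by
    intro b
    apply Finset.card_image_of_injOn
    intro p hp q hq hpq
    simp only [Finset.coe_filter, Set.mem_setOf_eq] at hp hq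
    exact Prod.ext hpq (hp.2.trans hq.2.symm)
  have hsum_deg : E.card = ∑ b ∈ B, (N b).card := by
    rw [Finset.card_eq_sum_card_fiberwise
      (f := Prod.snd) (fun p hp => (Finset.mem_product.1 (hE hp)).2)]
    exact Finset.sum_congr rfl fun b _ => (hcardN b).symm
  -- each d-subset of A is in ≤ ν - 1 neighborhoods
  have hfiber : ∀ S ∈ A.powersetCard d, (B.filter fun b => S ⊆ N b).card ≤ ν - 1 := by
    intro S hS
    rw [Finset.mem_powersetCard] at hS
    by_contra h
    push_neg at h
    have hge : ν ≤ (B.filter fun b => S ⊆ N b).card := by omega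
    obtain ⟨B', hB'sub, hB'card⟩ := Finset.exists_subset_card_eq hge
    refine hfree ⟨S, B', hS.1, hB'sub.trans (filter_subset _ _), hS.2, hB'card, ?_⟩
    intro p hp
    rw [Finset.mem_product] at hp
    have hsub := (Finset.mem_filter.1 (hB'sub hp.2)).2
    simpa using (hNmem p.1 p.2).1 (hsub hp.1)
  -- double counting
  have hswap : ∑ b ∈ B, ((N b).card.choose d) ≤ (ν - 1) * A.card.choose d := by
    have h1 : ∀ b ∈ B, (N b).card.choose d
        = ∑ S ∈ A.powersetCard d, if S ⊆ N b then 1 else 0 := by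
      intro b _
      rw [← Finset.card_powersetCard, ← Finset.card_filter]
      congr 1
      ext S
      simp only [Finset.mem_filter, Finset.mem_powersetCard]
      exact ⟨fun ⟨h1, h2⟩ => ⟨⟨h1.trans (hNsub b), h2⟩, h1⟩, fun ⟨⟨_, h2⟩, h1⟩ => ⟨h1, h2⟩⟩
    calc ∑ b ∈ B, (N b).card.choose d
        = ∑ b ∈ B, ∑ S ∈ A.powersetCard d, if S ⊆ N b then 1 else 0 :=
          Finset.sum_congr rfl h1
      _ = ∑ S ∈ A.powersetCard d, (B.filter fun b => S ⊆ N b).card := by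
          rw [Finset.sum_comm]
          exact Finset.sum_congr rfl fun S _ => (Finset.card_filter _ _).symm
      _ ≤ ∑ _S ∈ A.powersetCard d, (ν - 1) := Finset.sum_le_sum hfiber
      _ = (ν - 1) * A.card.choose d := by
          rw [Finset.sum_const, Finset.card_powersetCard, smul_eq_mul, mul_comm]
  -- shifted degrees
  set s : β → ℕ := fun b => (N b).card + 1 - d with hs
  have hsle : ∀ b, (N b).card ≤ s b + (d - 1) := by intro b; simp only [hs]; omega
  have hpow : ∑ b ∈ B, (s b) ^ d ≤ ν * A.card ^ d := by
    calc ∑ b ∈ B, (s b) ^ d ≤ ∑ b ∈ B, ((N b).card.descFactorial d) :=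
          Finset.sum_le_sum fun b _ => Nat.pow_sub_le_descFactorial _ d
      _ = ∑ b ∈ B, d.factorial * ((N b).card.choose d) := by
          simp [Nat.descFactorial_eq_factorial_mul_choose]
      _ = d.factorial * ∑ b ∈ B, (N b).card.choose d := by rw [Finset.mul_sum]
      _ ≤ d.factorial * ((ν - 1) * A.card.choose d) := Nat.mul_le_mul_left _ hswap
      _ = (ν - 1) * (d.factorial * A.card.choose d) := by ring
      _ = (ν - 1) * A.card.descFactorial d := by
          rw [Nat.descFactorial_eq_factorial_mul_choose]
      _ ≤ ν * A.card ^ d := Nat.mul_le_mul (by omega) (Nat.descFactorial_le_pow _ _)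
  -- real part
  set X : ℝ := ∑ b ∈ B, (s b : ℝ) with hX
  have hX0 : (0 : ℝ) ≤ X := by positivity
  have hXd : X ^ d ≤ (ν : ℝ) * (A.card : ℝ) ^ d * (B.card : ℝ) ^ (d - 1) := by
    have hjen := pow_sum_div_card_le_sum_pow (s := B) (f := fun b => (s b : ℝ))
      (fun i _ => by positivity) (d - 1)
    rw [show d - 1 + 1 = d from by omega] at hjen
    have h2 : (∑ b ∈ B, ((s b : ℝ)) ^ d) ≤ (ν : ℝ) * (A.card : ℝ) ^ d := by
      have := hpow
      have h3 : ((∑ b ∈ B, (s b) ^ d : ℕ) : ℝ) ≤ ((ν * A.card ^ d : ℕ) : ℝ) := by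
        exact_mod_cast this
      push_cast at h3
      exact h3
    rw [div_le_iff₀ (by positivity)] at hjen
    calc X ^ d ≤ (∑ b ∈ B, (s b : ℝ) ^ d) * (B.card : ℝ) ^ (d - 1) := hjen
      _ ≤ (ν : ℝ) * (A.card : ℝ) ^ d * (B.card : ℝ) ^ (d - 1) :=
          mul_le_mul_of_nonneg_right h2 (by positivity)
  have hXle : X ≤ (ν : ℝ) ^ ((1:ℝ)/d) * (A.card : ℝ) * (B.card : ℝ) ^ (1 - (1:ℝ)/d) := by
    have key : X ≤ ((ν : ℝ) * (A.card : ℝ) ^ d * (B.card : ℝ) ^ (d - 1)) ^ ((1:ℝ)/d) := by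
      have hx : X = ((X ^ (d : ℕ) : ℝ)) ^ ((1:ℝ)/d) := by
        rw [← Real.rpow_natCast X d, ← Real.rpow_mul hX0, mul_one_div, div_self hd0,
          Real.rpow_one]
      rw [hx]
      exact Real.rpow_le_rpow (by positivity) hXd (by positivity)
    refine key.trans_eq ?_
    rw [Real.mul_rpow (by positivity) (by positivity),
      Real.mul_rpow (by positivity) (by positivity)]
    congr 1
    · congr 1
      rw [← Real.rpow_natCast (A.card : ℝ) d, ← Real.rpow_mul (by positivity), mul_one_div,
        div_self hd0, Real.rpow_one]
    · rw [← Real.rpow_natCast (B.card : ℝ) (d - 1), ← Real.rpow_mul (by positivity)]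
      congr 1
      have hcast : ((d - 1 : ℕ) : ℝ) = (d : ℝ) - 1 := by
        rw [Nat.cast_sub hd]; norm_num
      rw [hcast]
      field_simp
  -- assemble
  have hEn : E.card ≤ (∑ b ∈ B, s b) + B.card * (d - 1) := by
    calc E.card = ∑ b ∈ B, (N b).card := hsum_deg
      _ ≤ ∑ b ∈ B, (s b + (d - 1)) := Finset.sum_le_sum fun b _ => hsle b
      _ = (∑ b ∈ B, s b) + B.card * (d - 1) := by
          rw [Finset.sum_add_distrib, Finset.sum_const, smul_eq_mul]
  have hEnR : (E.card : ℝ) ≤ X + (B.card : ℝ) * ((d : ℝ) - 1) := by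
    have h3 : ((E.card : ℕ) : ℝ) ≤ (((∑ b ∈ B, s b) + B.card * (d - 1) : ℕ) : ℝ) := by
      exact_mod_cast hEn
    push_cast [Nat.cast_sub hd] at h3
    simpa [hX] using h3
  have hBpos : (0 : ℝ) ≤ (B.card : ℝ) := by positivity
  nlinarith [hXle, hEnR, hBpos]
end

section
/- Hölder iteration lemma: let 𝓔 be a family of subsets of X × Y, and γ₁, γ₂ ∈ (0,1] with γ₁ + γ₂ ≥ 1, and C₀ : ℕ → ℝ, such that for every E ∈ 𝓔, ν ≥ 2 and finite A ⊆ X with |A| ≤ m, B ⊆ Y with |B| ≤ n, if E ∩ (A × B) is K_{2,ν}-free then |E ∩ (A × B)| ≤ C₀(ν)(m^{γ₁} n^{γ₂} + m + n). Then 𝓔 satisfies the γ-ST property with γ := 3 − 2(γ₁ + γ₂) and C'(ν) := 2C₀(ν)(C(ν) + 2): i.e., for every C : ℕ → ℕ_{≥1}, every E ∈ 𝓔, s ≥ 4, ν ≥ 2, n ∈ ℕ, A ⊆ X with |A| ≤ n^{s−2} and B ⊆ Y with |B| ≤ n², if for every a ∈ A there are at most C(ν)·n^{s−4} elements a' ∈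 A with |E_a ∩ E_{a'} ∩ B| ≥ ν, then |E ∩ (A × B)| ≤ C'(ν)·n^{(s−1)−γ}. -/
open Finset

lemma greedy_coloring {X : Type*} [DecidableEq X] (r : X → X → Prop) [DecidableRel r]
    (hsymm : ∀ a b, r a b → r b a) (D : ℕ) (A : Finset X)
    (hdeg : ∀ a ∈ A, (A.filter (fun a' => a' ≠ a ∧ r a a')).card ≤ D) :
    ∃ c : X → Fin (D + 1), ∀ a ∈ A, ∀ a' ∈ A, a ≠ a' → c a = c a' → ¬ r a a' := by
  induction A using Finset.induction_on with
  | empty => exact ⟨fun _ => 0, by simp⟩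
  | @insert a s ha ih =>
    obtain ⟨c', hc'⟩ := ih (fun b hb => le_trans (Finset.card_le_card
      (Finset.filter_subset_filter _ (Finset.subset_insert a s))) (hdeg b (Finset.mem_insert_of_mem hb)))
    set N : Finset X := s.filter (fun a' => r a a') with hN
    have hNcard : N.card ≤ D := by
      refine le_trans (Finset.card_le_card ?_) (hdeg a (Finset.mem_insert_self a s))
      intro x hx
      simp only [hN, Finset.mem_filter] at hx
      refine Finset.mem_filter.2 ⟨Finset.mem_insert_of_mem hx.1, ?_, hx.2⟩
      rintro rfl; exact ha hx.1
    have himg : (N.image c').card < Fintype.card (Fin (D + 1)) := by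
      calc (N.image c').card ≤ N.card := Finset.card_image_le
        _ ≤ D := hNcard
        _ < D + 1 := Nat.lt_succ_self D
        _ = Fintype.card (Fin (D + 1)) := (Fintype.card_fin _).symm
    obtain ⟨i, hi⟩ : ∃ i : Fin (D + 1), i ∉ N.image c' := by
      by_contra h
      push_neg at h
      have : (Finset.univ : Finset (Fin (D+1))) ⊆ N.image c' := fun j _ => h j
      exact absurd (Finset.card_le_card this) (by simpa using himg.not_ge)
    refine ⟨fun x => if x = a then i else c' x, ?_⟩
    intro x hx y hy hxy hcxy hr
    simp only at hcxy
    rcases Finset.mem_insert.1 hx with hxa | hx' <;> rcases Finset.mem_insert.1 hy with hya | hy'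
    · exact hxy (hxa.trans hya.symm)
    · have hya : y ≠ a := fun h => ha (h ▸ hy')
      rw [if_pos hxa, if_neg hya] at hcxy
      exact hi (Finset.mem_image.2 ⟨y, Finset.mem_filter.2 ⟨hy', hxa ▸ hr⟩, hcxy.symm⟩)
    · have hxa : x ≠ a := fun h => ha (h ▸ hx')
      rw [if_pos hya, if_neg hxa] at hcxy
      exact hi (Finset.mem_image.2 ⟨x, Finset.mem_filter.2 ⟨hx', hsymm _ _ (hya ▸ hr)⟩, hcxy⟩)
    · have hxa : x ≠ a := fun h => ha (h ▸ hx')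
      have hya : y ≠ a := fun h => ha (h ▸ hy')
      rw [if_neg hxa, if_neg hya] at hcxy
      exact hc' x hx' y hy' hxy hcxy hr

lemma holder_sum {ι : Type*} (s : Finset ι) (f : ι → ℝ) (hf : ∀ i ∈ s, 0 ≤ f i)
    {p : ℝ} (hp0 : 0 < p) (hp1 : p ≤ 1) :
    ∑ i ∈ s, f i ^ p ≤ (s.card : ℝ) ^ (1 - p) * (∑ i ∈ s, f i) ^ p := by
  rcases s.eq_empty_or_nonempty with rfl | hs
  · simp only [Finset.sum_empty, Finset.card_empty]
    positivity
  have hK : (0:ℝ) < s.card := by exact_mod_cast Finset.card_pos.mpr hs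
  have key := Real.arith_mean_le_rpow_mean s (fun _ => (s.card : ℝ)⁻¹) (fun i => f i ^ p)
    (fun i _ => by positivity) (by
      rw [Finset.sum_const, nsmul_eq_mul, mul_inv_cancel₀ hK.ne'])
    (fun i hi => Real.rpow_nonneg (hf i hi) p) (p := 1 / p)
    (by rw [le_div_iff₀ hp0, one_mul]; exact hp1)
  have e1 : ∀ i ∈ s, (s.card:ℝ)⁻¹ * (f i ^ p) ^ (1/p) = (s.card:ℝ)⁻¹ * f i := fun i hi => by
    rw [← Real.rpow_mul (hf i hi), mul_one_div, div_self hp0.ne', Real.rpow_one]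
  rw [Finset.sum_congr rfl e1, one_div_one_div, ← Finset.mul_sum, ← Finset.mul_sum] at key
  have key2 : (s.card:ℝ)⁻¹ * ∑ i ∈ s, f i ^ p ≤ ((s.card:ℝ)⁻¹) ^ p * (∑ i ∈ s, f i) ^ p := by
    refine key.trans_eq ?_
    rw [Real.mul_rpow (by positivity) (Finset.sum_nonneg hf)]
  calc ∑ i ∈ s, f i ^ p = (s.card:ℝ) * ((s.card:ℝ)⁻¹ * ∑ i ∈ s, f i ^ p) := by
        field_simp
    _ ≤ (s.card:ℝ) * (((s.card:ℝ)⁻¹) ^ p * (∑ i ∈ s, f i) ^ p) := by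
        exact mul_le_mul_of_nonneg_left key2 hK.le
    _ = (s.card : ℝ) ^ (1 - p) * (∑ i ∈ s, f i) ^ p := by
        rw [Real.inv_rpow hK.le, Real.rpow_sub hK, Real.rpow_one]
        have hKp : (0:ℝ) < (s.card:ℝ) ^ p := Real.rpow_pos_of_pos hK p
        field_simp

set_option maxHeartbeats 2000000 in

/-- Hölder iteration lemma, Lemma `prop: Holder iteration`: if every
`E ∈ 𝓔` satisfies the Kővári–Sós–Turán-type bound
`|E ∩ (A × B)| ≤ C₀(ν)(m^{γ₁} n^{γ₂} + m + n)` on `K_{2,ν}`-free grids, with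
`γ₁, γ₂ ∈ (0,1]` and `γ₁ + γ₂ ≥ 1`, then `𝓔` satisfies the `γ`-ST property with
`γ := 3 − 2(γ₁ + γ₂)` and `C'(ν) := 2 C₀(ν)(C(ν) + 2)`. -/
theorem statement10 {X Y : Type*} (𝓔 : Set (Set (X × Y))) (γ₁ γ₂ : ℝ) (C₀ : ℕ → ℝ)
    (hγ₁0 : 0 < γ₁) (hγ₁1 : γ₁ ≤ 1) (hγ₂0 : 0 < γ₂) (hγ₂1 : γ₂ ≤ 1)
    (hsum : 1 ≤ γ₁ + γ₂)
    (hyp : ∀ E ∈ 𝓔, ∀ ν : ℕ, 2 ≤ ν → ∀ (m n : ℕ) (A : Finset X) (B : Finset Y),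
      A.card ≤ m → B.card ≤ n →
      (∀ a ∈ A, ∀ a' ∈ A, a ≠ a' →
        {y : Y | y ∈ B ∧ (a, y) ∈ E ∧ (a', y) ∈ E}.ncard < ν) →
      ((E ∩ ((A ×ˢ B : Finset (X × Y)) : Set (X × Y))).ncard : ℝ) ≤
        C₀ ν * ((m : ℝ) ^ γ₁ * (n : ℝ) ^ γ₂ + (m : ℝ) + (n : ℝ))) :
    ∀ C : ℕ → ℕ, (∀ ν, 1 ≤ C ν) →
    ∀ E ∈ 𝓔, ∀ s : ℕ, 4 ≤ s → ∀ ν : ℕ, 2 ≤ ν → ∀ n : ℕ,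
    ∀ (A : Finset X) (B : Finset Y), A.card ≤ n ^ (s - 2) → B.card ≤ n ^ 2 →
      (∀ a ∈ A,
        {a' : X | a' ∈ A ∧
          ν ≤ {y : Y | y ∈ B ∧ (a, y) ∈ E ∧ (a', y) ∈ E}.ncard}.ncard ≤
            C ν * n ^ (s - 4)) →
      ((E ∩ ((A ×ˢ B : Finset (X × Y)) : Set (X × Y))).ncard : ℝ) ≤
        (2 * C₀ ν * ((C ν : ℝ) + 2)) *
          (n : ℝ) ^ ((s : ℝ) - 1 - (3 - 2 * (γ₁ + γ₂))) := by
  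
  classical
  intro C hC E hE s hs ν hν n A B hA hB hdeg
  have hC₀ : 0 ≤ C₀ ν := by
    have h := hyp E hE ν hν 1 1 ∅ ∅ (by simp) (by simp) (by simp)
    simp [Real.one_rpow] at h
    linarith
  have hCν : (1:ℝ) ≤ (C ν : ℝ) := by exact_mod_cast hC ν
  set T : ℝ := (s : ℝ) - 1 - (3 - 2 * (γ₁ + γ₂)) with hT
  rcases Nat.eq_zero_or_pos n with rfl | hn
  · have hA0 : A = ∅ := Finset.card_eq_zero.mp (Nat.le_zero.mp (by
      simpa [Nat.zero_pow (by omega : 0 < s - 2)] using hA))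
    subst hA0
    simp only [Finset.empty_product, Finset.coe_empty, Set.inter_empty, Set.ncard_empty,
      Nat.cast_zero]
    have h1 : (0:ℝ) ≤ 2 * C₀ ν * ((C ν : ℝ) + 2) := by nlinarith
    exact mul_nonneg h1 (Real.rpow_nonneg (by norm_num) _)
  set x : ℝ := (n : ℝ) with hx
  have hx1 : (1:ℝ) ≤ x := by rw [hx]; exact_mod_cast (hn : 1 ≤ n)
  have hx0 : (0:ℝ) < x := lt_of_lt_of_le one_pos hx1
  -- casts
  have hcast2 : ((n ^ (s - 2) : ℕ) : ℝ) = x ^ ((s:ℝ) - 2) := by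
    push_cast
    rw [← Real.rpow_natCast x (s - 2)]
    congr 1
    push_cast [Nat.cast_sub (by omega : 2 ≤ s)]
    ring
  have hcast4 : ((n ^ (s - 4) : ℕ) : ℝ) = x ^ ((s:ℝ) - 4) := by
    push_cast
    rw [← Real.rpow_natCast x (s - 4)]
    congr 1
    push_cast [Nat.cast_sub (by omega : 4 ≤ s)]
    ring
  have hcastN : ((n ^ 2 : ℕ) : ℝ) = x ^ (2:ℝ) := by
    push_cast
    rw [← Real.rpow_natCast x 2]
    norm_num
  -- the relation and coloring
  set D := C ν * n ^ (s - 4) with hD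
  have hsymm : ∀ a b : X, (fun a a' =>
      ν ≤ {y : Y | y ∈ B ∧ (a, y) ∈ E ∧ (a', y) ∈ E}.ncard) a b →
      (fun a a' => ν ≤ {y : Y | y ∈ B ∧ (a, y) ∈ E ∧ (a', y) ∈ E}.ncard) b a := by
    intro a b h
    have e : {y : Y | y ∈ B ∧ (b, y) ∈ E ∧ (a, y) ∈ E}
        = {y : Y | y ∈ B ∧ (a, y) ∈ E ∧ (b, y) ∈ E} := by
      ext y; simp only [Set.mem_setOf_eq]; tauto
    rw [e]; exact h
  have hdegF : ∀ a ∈ A, (A.filter (fun a' => a' ≠ a ∧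
      ν ≤ {y : Y | y ∈ B ∧ (a, y) ∈ E ∧ (a', y) ∈ E}.ncard)).card ≤ D := by
    intro a ha
    refine le_trans ?_ (hdeg a ha)
    rw [← Set.ncard_coe_finset]
    refine Set.ncard_le_ncard ?_ (Set.Finite.subset A.finite_toSet (fun z hz => hz.1))
    intro z hz
    simp only [Finset.coe_filter, Set.mem_setOf_eq] at hz
    exact ⟨hz.1, hz.2.2⟩
  obtain ⟨c, hcol⟩ := greedy_coloring
    (fun a a' => ν ≤ {y : Y | y ∈ B ∧ (a, y) ∈ E ∧ (a', y) ∈ E}.ncard) hsymm D A hdegF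
  set Ai : Fin (D + 1) → Finset X := fun i => A.filter (fun z => c z = i) with hAi
  -- conversion of ncard to Finset card
  have hconv : ∀ A' : Finset X, (E ∩ ((A' ×ˢ B : Finset (X × Y)) : Set (X × Y))).ncard
      = ((A' ×ˢ B).filter (· ∈ E)).card := by
    intro A'
    rw [← Set.ncard_coe_finset]
    congr 1
    ext p
    simp only [Set.mem_inter_iff, Finset.coe_filter, Set.mem_setOf_eq, Finset.mem_coe]
    tauto
  -- splitting
  have hsplit : ((A ×ˢ B).filter (· ∈ E)).card
      ≤ ∑ i : Fin (D + 1), ((Ai i ×ˢ B).filter (· ∈ E)).card := by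
    refine le_trans (Finset.card_le_card ?_) Finset.card_biUnion_le
    intro p hp
    simp only [Finset.mem_filter, Finset.mem_product] at hp
    refine Finset.mem_biUnion.2 ⟨c p.1, Finset.mem_univ _, ?_⟩
    exact Finset.mem_filter.2 ⟨Finset.mem_product.2
      ⟨Finset.mem_filter.2 ⟨hp.1.1, rfl⟩, hp.1.2⟩, hp.2⟩
  -- per-class bound
  have hper : ∀ i : Fin (D + 1), (((Ai i ×ˢ B).filter (· ∈ E)).card : ℝ)
      ≤ C₀ ν * (((Ai i).card : ℝ) ^ γ₁ * ((n ^ 2 : ℕ) : ℝ) ^ γ₂ + ((Ai i).card : ℝ) + ((n ^ 2 : ℕ) : ℝ)) := by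
    intro i
    have hind : ∀ a ∈ Ai i, ∀ a' ∈ Ai i, a ≠ a' →
        {y : Y | y ∈ B ∧ (a, y) ∈ E ∧ (a', y) ∈ E}.ncard < ν := by
      intro a ha a' ha' hne
      rw [hAi] at ha ha'
      simp only [Finset.mem_filter] at ha ha'
      by_contra h
      push_neg at h
      exact hcol a ha.1 a' ha'.1 hne (ha.2.trans ha'.2.symm) h
    have h := hyp E hE ν hν (Ai i).card (n ^ 2) (Ai i) B le_rfl hB hind
    rwa [hconv] at h
  -- sum of class sizes
  have hsumcard : ∑ i : Fin (D + 1), (Ai i).card = A.card :=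
    (Finset.card_eq_sum_card_fiberwise (fun z _ => Finset.mem_univ (c z))).symm
  have ecard : ∑ i : Fin (D + 1), ((Ai i).card : ℝ) = (A.card : ℝ) := by
    rw [← Nat.cast_sum]
    exact_mod_cast congrArg (Nat.cast : ℕ → ℝ) hsumcard
  -- Hölder
  have hhold : ∑ i : Fin (D + 1), ((Ai i).card : ℝ) ^ γ₁
      ≤ (((D + 1 : ℕ)) : ℝ) ^ (1 - γ₁) * ((A.card : ℝ)) ^ γ₁ := by
    have h := holder_sum Finset.univ (fun i : Fin (D + 1) => ((Ai i).card : ℝ))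
      (fun i _ => by positivity) hγ₁0 hγ₁1
    rwa [ecard, Finset.card_univ, Fintype.card_fin] at h
  -- numeric bounds
  have hxA : (A.card : ℝ) ≤ x ^ ((s:ℝ) - 2) := hcast2 ▸ (by exact_mod_cast hA)
  have hxk : ((D + 1 : ℕ) : ℝ) ≤ ((C ν : ℝ) + 1) * x ^ ((s:ℝ) - 4) := by
    have h1 : D + 1 ≤ (C ν + 1) * n ^ (s - 4) := by
      have h2 : 1 ≤ n ^ (s - 4) := Nat.one_le_pow _ _ hn
      calc D + 1 = C ν * n ^ (s - 4) + 1 := rfl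
        _ ≤ C ν * n ^ (s - 4) + n ^ (s - 4) := by omega
        _ = (C ν + 1) * n ^ (s - 4) := by ring
    calc ((D + 1 : ℕ) : ℝ) ≤ (((C ν + 1) * n ^ (s - 4) : ℕ) : ℝ) := by exact_mod_cast h1
      _ = ((C ν : ℝ) + 1) * x ^ ((s:ℝ) - 4) := by
          rw [Nat.cast_mul, hcast4]
          push_cast
          ring
  set P : ℝ := x ^ T with hP
  have hPpos : 0 < P := Real.rpow_pos_of_pos hx0 T
  have hCν1 : (0:ℝ) < (C ν : ℝ) + 1 := by linarith
  -- pieces for hb1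
  have hk1 : ((D + 1 : ℕ) : ℝ) ^ (1 - γ₁)
      ≤ ((C ν : ℝ) + 1) * x ^ (((s:ℝ) - 4) * (1 - γ₁)) := by
    have h1 : ((D + 1 : ℕ) : ℝ) ^ (1 - γ₁)
        ≤ (((C ν : ℝ) + 1) * x ^ ((s:ℝ) - 4)) ^ (1 - γ₁) :=
      Real.rpow_le_rpow (by positivity) hxk (by linarith)
    have h2 : (((C ν : ℝ) + 1) * x ^ ((s:ℝ) - 4)) ^ (1 - γ₁)
        = ((C ν : ℝ) + 1) ^ (1 - γ₁) * (x ^ ((s:ℝ) - 4)) ^ (1 - γ₁) :=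
      Real.mul_rpow hCν1.le (Real.rpow_nonneg hx0.le _)
    have h3 : ((C ν : ℝ) + 1) ^ (1 - γ₁) ≤ (C ν : ℝ) + 1 := by
      calc ((C ν : ℝ) + 1) ^ (1 - γ₁) ≤ ((C ν : ℝ) + 1) ^ (1:ℝ) :=
            Real.rpow_le_rpow_of_exponent_le (by linarith) (by linarith)
        _ = (C ν : ℝ) + 1 := Real.rpow_one _
    have h4 : (x ^ ((s:ℝ) - 4)) ^ (1 - γ₁) = x ^ (((s:ℝ) - 4) * (1 - γ₁)) := by
      rw [← Real.rpow_mul hx0.le]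
    calc ((D + 1 : ℕ) : ℝ) ^ (1 - γ₁)
        ≤ ((C ν : ℝ) + 1) ^ (1 - γ₁) * (x ^ ((s:ℝ) - 4)) ^ (1 - γ₁) := h1.trans_eq h2
      _ ≤ ((C ν : ℝ) + 1) * x ^ (((s:ℝ) - 4) * (1 - γ₁)) := by
          rw [h4]
          exact mul_le_mul_of_nonneg_right h3 (Real.rpow_nonneg hx0.le _)
  have hxAg : ((A.card : ℝ)) ^ γ₁ ≤ x ^ (((s:ℝ) - 2) * γ₁) := by
    have h1 : ((A.card : ℝ)) ^ γ₁ ≤ (x ^ ((s:ℝ) - 2)) ^ γ₁ :=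
      Real.rpow_le_rpow (by positivity) hxA hγ₁0.le
    rwa [← Real.rpow_mul hx0.le] at h1
  have hNg : ((n ^ 2 : ℕ) : ℝ) ^ γ₂ = x ^ (2 * γ₂) := by
    rw [hcastN, ← Real.rpow_mul hx0.le]
  have hprod : x ^ (((s:ℝ) - 4) * (1 - γ₁)) * x ^ (((s:ℝ) - 2) * γ₁) * x ^ (2 * γ₂) = P := by
    rw [← Real.rpow_add hx0, ← Real.rpow_add hx0, hP]
    congr 1
    rw [hT]
    ring
  have hb1 : (∑ i : Fin (D + 1), ((Ai i).card : ℝ) ^ γ₁) * ((n ^ 2 : ℕ) : ℝ) ^ γ₂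
      ≤ ((C ν : ℝ) + 1) * P := by
    have hNγ : (0:ℝ) ≤ ((n ^ 2 : ℕ) : ℝ) ^ γ₂ := Real.rpow_nonneg (Nat.cast_nonneg _) _
    calc (∑ i : Fin (D + 1), ((Ai i).card : ℝ) ^ γ₁) * ((n ^ 2 : ℕ) : ℝ) ^ γ₂
        ≤ (((D + 1 : ℕ) : ℝ) ^ (1 - γ₁) * ((A.card : ℝ)) ^ γ₁) * ((n ^ 2 : ℕ) : ℝ) ^ γ₂ :=
          mul_le_mul_of_nonneg_right hhold hNγ
      _ ≤ (((C ν : ℝ) + 1) * x ^ (((s:ℝ) - 4) * (1 - γ₁)) * (x ^ (((s:ℝ) - 2) * γ₁)))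
            * x ^ (2 * γ₂) := by
          rw [hNg]
          refine mul_le_mul_of_nonneg_right ?_ (Real.rpow_nonneg hx0.le _)
          exact mul_le_mul hk1 hxAg (Real.rpow_nonneg (Nat.cast_nonneg _) _) (mul_nonneg hCν1.le (Real.rpow_nonneg hx0.le _))
      _ = ((C ν : ℝ) + 1) * P := by
          rw [← hprod]; ring
  have hb2 : (A.card : ℝ) ≤ P := by
    refine hxA.trans ?_
    rw [hP]
    refine Real.rpow_le_rpow_of_exponent_le hx1 ?_
    rw [hT]; linarith
  have hb3 : ((D + 1 : ℕ) : ℝ) * ((n ^ 2 : ℕ) : ℝ) ≤ ((C ν : ℝ) + 1) * P := by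
    calc ((D + 1 : ℕ) : ℝ) * ((n ^ 2 : ℕ) : ℝ) ≤ (((C ν : ℝ) + 1) * x ^ ((s:ℝ) - 4)) * x ^ (2:ℝ) := by
          rw [hcastN]
          exact mul_le_mul_of_nonneg_right hxk (Real.rpow_nonneg hx0.le _)
      _ = ((C ν : ℝ) + 1) * x ^ ((s:ℝ) - 4 + 2) := by
          rw [mul_assoc, ← Real.rpow_add hx0]
      _ ≤ ((C ν : ℝ) + 1) * P := by
          refine mul_le_mul_of_nonneg_left ?_ hCν1.le
          rw [hP]
          refine Real.rpow_le_rpow_of_exponent_le hx1 ?_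
          rw [hT]; linarith
  -- final chain
  rw [hconv]
  calc (((A ×ˢ B).filter (· ∈ E)).card : ℝ)
      ≤ ∑ i : Fin (D + 1), (((Ai i ×ˢ B).filter (· ∈ E)).card : ℝ) := by
        exact_mod_cast hsplit
    _ ≤ ∑ i : Fin (D + 1), C₀ ν * (((Ai i).card : ℝ) ^ γ₁ * ((n ^ 2 : ℕ) : ℝ) ^ γ₂ + ((Ai i).card : ℝ) + ((n ^ 2 : ℕ) : ℝ)) :=
        Finset.sum_le_sum fun i _ => hper i
    _ = C₀ ν * ((∑ i : Fin (D + 1), ((Ai i).card : ℝ) ^ γ₁) * ((n ^ 2 : ℕ) : ℝ) ^ γ₂ + (A.card : ℝ)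
          + ((D + 1 : ℕ) : ℝ) * ((n ^ 2 : ℕ) : ℝ)) := by
        rw [← Finset.mul_sum]
        congr 1
        rw [Finset.sum_add_distrib, Finset.sum_add_distrib, ← Finset.sum_mul, ecard,
          Finset.sum_const, Finset.card_univ, Fintype.card_fin, nsmul_eq_mul]
    _ ≤ C₀ ν * (((C ν : ℝ) + 1) * P + P + ((C ν : ℝ) + 1) * P) :=
        mul_le_mul_of_nonneg_left (add_le_add (add_le_add hb1 hb2) hb3) hC₀
    _ = C₀ ν * (2 * (C ν : ℝ) + 3) * P := by ring
    _ ≤ 2 * C₀ ν * ((C ν : ℝ) + 2) * P := by nlinarith [mul_nonneg hC₀ hPpos.le]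
end

section
/- Let Q ⊆ X₁ × X₂ × X₃ be fiber-algebraic of degree ≤ d, and define Q* ⊆ X₂ × X₂ × X₃ × X₃ by Q*(x₂,x₂',x₃,x₃') iff there exists x₁ ∈ X₁ with (x₁,x₂,x₃) ∈ Q and (x₁,x₂',x₃') ∈ Q. Then Q* is fiber-algebraic of degree ≤ d². -/
lemma aux_biUnion {α β : Type*} (d : ℕ) (S : Set α) (hS : S.encard ≤ (d : ℕ∞))
    (T : α → Set β) (hT : ∀ a, (T a).encard ≤ (d : ℕ∞)) :
    {b | ∃ a ∈ S, b ∈ T a}.encard ≤ ((d * d : ℕ) : ℕ∞) := by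
  classical
  have hSf : S.Finite := Set.finite_of_encard_le_coe hS
  have hTf : ∀ a, (T a).Finite := fun a => Set.finite_of_encard_le_coe (hT a)
  have hEq : {b | ∃ a ∈ S, b ∈ T a} =
      ↑(hSf.toFinset.biUnion (fun a => (hTf a).toFinset)) := by
    ext b
    simp [Set.Finite.mem_toFinset]
  rw [hEq, Set.encard_coe_eq_coe_finsetCard]
  have hScard : hSf.toFinset.card ≤ d := by
    have := hS
    rw [Set.encard_le_coe_iff_finite_ncard_le] at this
    have this2 := this.2
    rwa [Set.ncard_eq_toFinset_card _ hSf] at this2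
  have hTcard : ∀ a ∈ hSf.toFinset, ((hTf a).toFinset).card ≤ d := by
    intro a _
    have := hT a
    rw [Set.encard_le_coe_iff_finite_ncard_le] at this
    have this2 := this.2
    rwa [Set.ncard_eq_toFinset_card _ (hTf a)] at this2
  have := Finset.card_biUnion_le_card_mul hSf.toFinset _ d hTcard
  have hle : (hSf.toFinset.biUnion (fun a => (hTf a).toFinset)).card ≤ d * d :=
    le_trans this (Nat.mul_le_mul_right d hScard)
  exact_mod_cast hle

/-- if `Q ⊆ X₁ × X₂ × X₃` is fiber-algebraic of degree `≤ d`, then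
`Q*(x₂,x₂',x₃,x₃') :⟺ ∃ x₁, Q(x₁,x₂,x₃) ∧ Q(x₁,x₂',x₃')` is fiber-algebraic of
degree `≤ d²`. -/
theorem statement14 {X₁ X₂ X₃ : Type*} (d : ℕ) (Q : X₁ → X₂ → X₃ → Prop)
    (h1 : ∀ x₂ x₃, {x₁ : X₁ | Q x₁ x₂ x₃}.encard ≤ (d : ℕ∞))
    (h2 : ∀ x₁ x₃, {x₂ : X₂ | Q x₁ x₂ x₃}.encard ≤ (d : ℕ∞))
    (h3 : ∀ x₁ x₂, {x₃ : X₃ | Q x₁ x₂ x₃}.encard ≤ (d : ℕ∞)) :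
    (∀ x₂' x₃ x₃',
      {x₂ : X₂ | ∃ x₁, Q x₁ x₂ x₃ ∧ Q x₁ x₂' x₃'}.encard ≤ ((d ^ 2 : ℕ) : ℕ∞)) ∧
    (∀ x₂ x₃ x₃',
      {x₂' : X₂ | ∃ x₁, Q x₁ x₂ x₃ ∧ Q x₁ x₂' x₃'}.encard ≤ ((d ^ 2 : ℕ) : ℕ∞)) ∧
    (∀ x₂ x₂' x₃',
      {x₃ : X₃ | ∃ x₁, Q x₁ x₂ x₃ ∧ Q x₁ x₂' x₃'}.encard ≤ ((d ^ 2 : ℕ) : ℕ∞)) ∧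
    (∀ x₂ x₂' x₃,
      {x₃' : X₃ | ∃ x₁, Q x₁ x₂ x₃ ∧ Q x₁ x₂' x₃'}.encard ≤ ((d ^ 2 : ℕ) : ℕ∞)) := by
  have hsq : (d ^ 2 : ℕ) = d * d := sq d
  rw [hsq]
  refine ⟨?_, ?_, ?_, ?_⟩
  · intro x₂' x₃ x₃'
    refine le_trans (Set.encard_le_encard ?_)
      (aux_biUnion d {x₁ | Q x₁ x₂' x₃'} (h1 x₂' x₃') (fun x₁ => {x₂ | Q x₁ x₂ x₃})
        (fun x₁ => h2 x₁ x₃))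
    rintro x₂ ⟨x₁, hQ, hQ'⟩
    exact ⟨x₁, hQ', hQ⟩
  · intro x₂ x₃ x₃'
    refine le_trans (Set.encard_le_encard ?_)
      (aux_biUnion d {x₁ | Q x₁ x₂ x₃} (h1 x₂ x₃) (fun x₁ => {x₂' | Q x₁ x₂' x₃'})
        (fun x₁ => h2 x₁ x₃'))
    rintro x₂' ⟨x₁, hQ, hQ'⟩
    exact ⟨x₁, hQ, hQ'⟩
  · intro x₂ x₂' x₃'
    refine le_trans (Set.encard_le_encard ?_)
      (aux_biUnion d {x₁ | Q x₁ x₂' x₃'} (h1 x₂' x₃') (fun x₁ => {x₃ | Q x₁ x₂ x₃})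
        (fun x₁ => h3 x₁ x₂))
    rintro x₃ ⟨x₁, hQ, hQ'⟩
    exact ⟨x₁, hQ', hQ⟩
  · intro x₂ x₂' x₃
    refine le_trans (Set.encard_le_encard ?_)
      (aux_biUnion d {x₁ | Q x₁ x₂ x₃} (h1 x₂ x₃) (fun x₁ => {x₃' | Q x₁ x₂' x₃'})
        (fun x₁ => h3 x₁ x₂'))
    rintro x₃' ⟨x₁, hQ, hQ'⟩
    exact ⟨x₁, hQ, hQ'⟩
end

section
/- Let Q ⊆ X₁ × X₂ × X₃ be fiber-algebraic of degree ≤ d, let A₁ ⊆ X₁, A₂ ⊆ X₂, A₃ ⊆ X₃ be finite, set Q̃ := Q ∩ (A₁ × A₂ × A₃) and Q̃* := Q* ∩ (A₂ × A₂ × A₃ × A₃), where Q*(x₂,x₂',x₃,x₃') holds iff ∃x₁ with (x₁,x₂,x₃) ∈ Q and (x₁,x₂',x₃') ∈ Q. Then |Q̃| ≤ d · |A₁|^{1/2} · |Q̃*|^{1/2}. -/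
/-!
Write `Q̃` as the relation `x₁ ~ (x₂, x₃)` between `A₁` and `A₂ × A₃`. Counting `Q̃` along the
fibres over `A₁` and applying Cauchy–Schwarz gives `|Q̃|² ≤ |A₁| ∑_{a₁} |Q̃_{a₁}|²`. The sum of
squares counts triples `(a₁, (a₂, a₃), (a₂', a₃'))` with both pairs related to `a₁`; grouping them
by the pair of pairs, only pairs in `Q̃*` contribute, each at most `d` times by fiber-algebraicity
in the first coordinate. Hence `|Q̃|² ≤ d |A₁| |Q̃*|`, and `√d ≤ d` for `d ∈ ℕ`.
-/

namespace Finset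

open scoped Classical

variable {α β : Type*} (R : α → β → Prop) (A : Finset α) (B : Finset β)

lemma card_filter_product_eq_sum_card_filter :
    #{p ∈ A ×ˢ B | R p.1 p.2} = ∑ a ∈ A, #{b ∈ B | R a b} := by
  simp only [card_filter, sum_product]

lemma card_filter_sq (a : α) :
    #{b ∈ B | R a b} ^ 2 = #{q ∈ B ×ˢ B | R a q.1 ∧ R a q.2} := by
  rw [sq, ← card_product, filter_product]

lemma sum_card_filter_sq_eq_sum_card_filter_and :
    ∑ a ∈ A, #{b ∈ B | R a b} ^ 2 = ∑ q ∈ B ×ˢ B, #{a ∈ A | R a q.1 ∧ R a q.2} := by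
  rw [sum_congr rfl fun a _ => card_filter_sq R B a]
  simp only [card_filter]
  exact sum_comm

variable {R A} {d : ℕ}

lemma sum_card_filter_sq_le (hR : ∀ b b', #{a ∈ A | R a b ∧ R a b'} ≤ d) :
    ∑ a ∈ A, #{b ∈ B | R a b} ^ 2 ≤ d * #{q ∈ B ×ˢ B | ∃ a, R a q.1 ∧ R a q.2} := by
  have hcommon : ∀ q ∈ B ×ˢ B, #{a ∈ A | R a q.1 ∧ R a q.2} ≠ 0 → ∃ a, R a q.1 ∧ R a q.2 := by
    intro q _ hq
    obtain ⟨a, ha⟩ := card_ne_zero.mp hq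
    exact ⟨a, (mem_filter.mp ha).2⟩
  rw [sum_card_filter_sq_eq_sum_card_filter_and, ← sum_filter_of_ne hcommon, mul_comm, ← smul_eq_mul]
  exact sum_le_card_nsmul _ _ _ fun q _ => hR q.1 q.2

theorem card_filter_product_sq_le (hR : ∀ b b', #{a ∈ A | R a b ∧ R a b'} ≤ d) :
    #{p ∈ A ×ˢ B | R p.1 p.2} ^ 2 ≤ #A * (d * #{q ∈ B ×ˢ B | ∃ a, R a q.1 ∧ R a q.2}) := by
  rw [card_filter_product_eq_sum_card_filter]
  exact sq_sum_le_card_mul_sum_sq.trans (Nat.mul_le_mul_left _ (sum_card_filter_sq_le B hR))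

lemma card_filter_le_of_encard_le {p : α → Prop} (h : {a | p a}.encard ≤ d) :
    #{a ∈ A | p a} ≤ d := by
  have : ((#{a ∈ A | p a} : ℕ) : ℕ∞) ≤ d := by
    rw [← Set.encard_coe_eq_coe_finsetCard]
    exact (Set.encard_le_encard fun a ha => (mem_filter.mp ha).2).trans h
  exact_mod_cast this

end Finset

open Finset

lemma Real.le_natCast_mul_sqrt_mul_sqrt_of_sq_le {x a b : ℝ} {d : ℕ} (ha : 0 ≤ a)
    (h : x ^ 2 ≤ a * (d * b)) : x ≤ d * √a * √b := by
  have hd : √(d : ℝ) ≤ d := Real.sqrt_le_self_iff.mpr <| by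
    rcases Nat.eq_zero_or_pos d with rfl | hpos
    · exact Or.inl Nat.cast_zero
    · exact Or.inr (Nat.one_le_cast.mpr hpos)
  calc x ≤ |x| := le_abs_self x
    _ ≤ √(a * (d * b)) := Real.abs_le_sqrt h
    _ = √d * √a * √b := by rw [Real.sqrt_mul ha, Real.sqrt_mul (Nat.cast_nonneg d)]; ring
    _ ≤ d * √a * √b := by gcongr

open scoped Classical in
lemma ncard_setOf_exists_fiber_pair_eq_card_filter {X₁ X₂ X₃ : Type*} (Q : X₁ → X₂ → X₃ → Prop)
    (A₂ : Finset X₂) (A₃ : Finset X₃) :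
    {q : X₂ × X₂ × X₃ × X₃ | (∃ x₁, Q x₁ q.1 q.2.2.1 ∧ Q x₁ q.2.1 q.2.2.2) ∧
      q.1 ∈ A₂ ∧ q.2.1 ∈ A₂ ∧ q.2.2.1 ∈ A₃ ∧ q.2.2.2 ∈ A₃}.ncard =
        #{q ∈ (A₂ ×ˢ A₃) ×ˢ (A₂ ×ˢ A₃) | ∃ x₁, Q x₁ q.1.1 q.1.2 ∧ Q x₁ q.2.1 q.2.2} := by
  let e := (Equiv.prodProdProdComm X₂ X₃ X₂ X₃).trans (Equiv.prodAssoc X₂ X₂ (X₃ × X₃))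
  rw [← Set.ncard_coe_finset, ← Set.ncard_image_of_injective _ e.injective, e.image_eq_preimage_symm]
  congr 1
  ext ⟨x₂, x₂', x₃, x₃'⟩
  simp only [Set.mem_ofPred_eq, Set.preimage_ofPred_eq, coe_filter, mem_product, e,
    Equiv.symm_trans, Equiv.prodProdProdComm_symm, Equiv.coe_trans, Function.comp_apply,
    Equiv.prodAssoc_symm_apply, Equiv.prodProdProdComm_apply]
  tauto

theorem statement15_general {X₁ X₂ X₃ : Type*} (d : ℕ) (Q : X₁ → X₂ → X₃ → Prop)
    (h1 : ∀ x₂ x₃, {x₁ : X₁ | Q x₁ x₂ x₃}.encard ≤ (d : ℕ∞))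
    (A₁ : Finset X₁) (A₂ : Finset X₂) (A₃ : Finset X₃) :
    ({p : X₁ × X₂ × X₃ | Q p.1 p.2.1 p.2.2 ∧
        p.1 ∈ A₁ ∧ p.2.1 ∈ A₂ ∧ p.2.2 ∈ A₃}.ncard : ℝ) ≤
      (d : ℝ) * Real.sqrt (A₁.card : ℝ) *
        Real.sqrt (({q : X₂ × X₂ × X₃ × X₃ |
          (∃ x₁, Q x₁ q.1 q.2.2.1 ∧ Q x₁ q.2.1 q.2.2.2) ∧
          q.1 ∈ A₂ ∧ q.2.1 ∈ A₂ ∧ q.2.2.1 ∈ A₃ ∧ q.2.2.2 ∈ A₃}.ncard : ℝ)) := by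
  classical
  have hQ : {p : X₁ × X₂ × X₃ | Q p.1 p.2.1 p.2.2 ∧ p.1 ∈ A₁ ∧ p.2.1 ∈ A₂ ∧ p.2.2 ∈ A₃}.ncard =
      #{p ∈ A₁ ×ˢ (A₂ ×ˢ A₃) | Q p.1 p.2.1 p.2.2} := by
    rw [← Set.ncard_coe_finset]
    congr 1
    ext p
    simp only [Set.mem_ofPred_eq, coe_filter, mem_product]
    tauto
  have hcommon : ∀ r r' : X₂ × X₃, #{x₁ ∈ A₁ | Q x₁ r.1 r.2 ∧ Q x₁ r'.1 r'.2} ≤ d := fun r _ =>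
    (card_le_card (monotone_filter_right _ fun _ _ h => h.1)).trans
      (card_filter_le_of_encard_le (h1 r.1 r.2))
  rw [hQ, ncard_setOf_exists_fiber_pair_eq_card_filter]
  apply Real.le_natCast_mul_sqrt_mul_sqrt_of_sq_le (Nat.cast_nonneg _)
  exact_mod_cast card_filter_product_sq_le (R := fun x₁ (r : X₂ × X₃) => Q x₁ r.1 r.2) _ hcommon

/-- Cauchy–Schwarz bound: for `Q ⊆ X₁ × X₂ × X₃` fiber-algebraic of
degree `≤ d` and finite `A₁, A₂, A₃`, with `Q̃ := Q ∩ (A₁ × A₂ × A₃)` and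
`Q̃* := Q* ∩ (A₂ × A₂ × A₃ × A₃)`, one has `|Q̃| ≤ d |A₁|^{1/2} |Q̃*|^{1/2}`. -/
theorem statement15 {X₁ X₂ X₃ : Type*} (d : ℕ) (Q : X₁ → X₂ → X₃ → Prop)
    (h1 : ∀ x₂ x₃, {x₁ : X₁ | Q x₁ x₂ x₃}.encard ≤ (d : ℕ∞))
    (h2 : ∀ x₁ x₃, {x₂ : X₂ | Q x₁ x₂ x₃}.encard ≤ (d : ℕ∞))
    (h3 : ∀ x₁ x₂, {x₃ : X₃ | Q x₁ x₂ x₃}.encard ≤ (d : ℕ∞))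
    (A₁ : Finset X₁) (A₂ : Finset X₂) (A₃ : Finset X₃) :
    ({p : X₁ × X₂ × X₃ | Q p.1 p.2.1 p.2.2 ∧
        p.1 ∈ A₁ ∧ p.2.1 ∈ A₂ ∧ p.2.2 ∈ A₃}.ncard : ℝ) ≤
      (d : ℝ) * Real.sqrt (A₁.card : ℝ) *
        Real.sqrt (({q : X₂ × X₂ × X₃ × X₃ |
          (∃ x₁, Q x₁ q.1 q.2.2.1 ∧ Q x₁ q.2.1 q.2.2.2) ∧
          q.1 ∈ A₂ ∧ q.2.1 ∈ A₂ ∧ q.2.2.1 ∈ A₃ ∧ q.2.2.2 ∈ A₃}.ncard : ℝ)) :=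
  statement15_general d Q h1 A₁ A₂ A₃
end

section
/- Let Q ⊆ X₁ × ⋯ × Xₘ (m ≥ 4) satisfy (P1) and (P2), fix e = (e₁,…,eₘ) ∈ Q, and let (𝓕,+) be the abelian group of bijections X₁ → X₂ arising as fibers of Q, with f + f' := f ∘ f₀⁻¹ ∘ f' and identity f₀ := the fiber function through (e₁,e₂) determined by (e₃,…,eₘ). Define π₁ : X₁ → 𝓕 by π₁(a) := the unique f ∈ 𝓕 with f(a) = e₂, and π₂ : X₂ → 𝓕 by π₂(b) := the unique f ∈ 𝓕 with f(e₁) = b. Then for all a ∈ X₁ and b ∈ X₂, π₁(a) + π₂(b) is the unique f ∈ 𝓕 with f(a) = b. -/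
universe u

namespace Statement18Aux

variable {m : ℕ} {X : Fin m → Type u}

/-- A tuple equal to `e` except at the four distinguished coordinates. -/
def Tup (e : ∀ k, X k) (i₀ i₁ i₂ i₃ : Fin m)
    (x : X i₀) (y : X i₁) (t : X i₂) (u : X i₃) : ∀ k, X k :=
  Function.update (Function.update (Function.update (Function.update e i₃ u) i₂ t) i₁ y) i₀ x

variable {e : ∀ k, X k} {i₀ i₁ i₂ i₃ : Fin m}

theorem Tup_eval₀ (x y t u) : Tup e i₀ i₁ i₂ i₃ x y t u i₀ = x :=
  Function.update_self _ _ _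

theorem Tup_eval₁ (h : i₁ ≠ i₀) (x y t u) : Tup e i₀ i₁ i₂ i₃ x y t u i₁ = y := by
  simp [Tup, Function.update_of_ne h]

theorem Tup_eval₂ (h0 : i₂ ≠ i₀) (h1 : i₂ ≠ i₁) (x y t u) :
    Tup e i₀ i₁ i₂ i₃ x y t u i₂ = t := by
  simp [Tup, Function.update_of_ne h0, Function.update_of_ne h1]

theorem Tup_eval₃ (h0 : i₃ ≠ i₀) (h1 : i₃ ≠ i₁) (h2 : i₃ ≠ i₂) (x y t u) :
    Tup e i₀ i₁ i₂ i₃ x y t u i₃ = u := by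
  simp [Tup, Function.update_of_ne h0, Function.update_of_ne h1, Function.update_of_ne h2]

theorem Tup_eval_ne {k : Fin m} (h0 : k ≠ i₀) (h1 : k ≠ i₁) (h2 : k ≠ i₂) (h3 : k ≠ i₃)
    (x y t u) : Tup e i₀ i₁ i₂ i₃ x y t u k = e k := by
  simp [Tup, Function.update_of_ne h0, Function.update_of_ne h1, Function.update_of_ne h2,
    Function.update_of_ne h3]

/-- Master congruence for `Tup` at a fixed coordinate. -/
theorem Tup_congr (h10 : i₁ ≠ i₀) (h20 : i₂ ≠ i₀) (h21 : i₂ ≠ i₁)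
    (h30 : i₃ ≠ i₀) (h31 : i₃ ≠ i₁) (h32 : i₃ ≠ i₂)
    {x x' : X i₀} {y y' : X i₁} {t t' : X i₂} {u u' : X i₃} (k : Fin m)
    (hx : k = i₀ → x = x') (hy : k = i₁ → y = y')
    (ht : k = i₂ → t = t') (hu : k = i₃ → u = u') :
    Tup e i₀ i₁ i₂ i₃ x y t u k = Tup e i₀ i₁ i₂ i₃ x' y' t' u' k := by
  by_cases hk0 : k = i₀
  · subst hk0; rw [Tup_eval₀, Tup_eval₀, hx rfl]
  · by_cases hk1 : k = i₁
    · subst hk1; rw [Tup_eval₁ h10, Tup_eval₁ h10, hy rfl]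
    · by_cases hk2 : k = i₂
      · subst hk2; rw [Tup_eval₂ h20 h21, Tup_eval₂ h20 h21, ht rfl]
      · by_cases hk3 : k = i₃
        · subst hk3; rw [Tup_eval₃ h30 h31 h32, Tup_eval₃ h30 h31 h32, hu rfl]
        · rw [Tup_eval_ne hk0 hk1 hk2 hk3, Tup_eval_ne hk0 hk1 hk2 hk3]

theorem Tup_update₁ (h10 : i₁ ≠ i₀) (h20 : i₂ ≠ i₀) (h21 : i₂ ≠ i₁)
    (h30 : i₃ ≠ i₀) (h31 : i₃ ≠ i₁) (h32 : i₃ ≠ i₂)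
    (x : X i₀) (y y' : X i₁) (t : X i₂) (u : X i₃) :
    Function.update (Tup e i₀ i₁ i₂ i₃ x y t u) i₁ y' = Tup e i₀ i₁ i₂ i₃ x y' t u := by
  funext k
  rcases eq_or_ne k i₁ with rfl | hk
  · rw [Function.update_self, Tup_eval₁ h10]
  · rw [Function.update_of_ne hk]
    exact Tup_congr h10 h20 h21 h30 h31 h32 k (fun _ => rfl) (fun h => absurd h hk)
      (fun _ => rfl) (fun _ => rfl)

theorem Tup_update₂ (h10 : i₁ ≠ i₀) (h20 : i₂ ≠ i₀) (h21 : i₂ ≠ i₁)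
    (h30 : i₃ ≠ i₀) (h31 : i₃ ≠ i₁) (h32 : i₃ ≠ i₂)
    (x : X i₀) (y : X i₁) (t t' : X i₂) (u : X i₃) :
    Function.update (Tup e i₀ i₁ i₂ i₃ x y t u) i₂ t' = Tup e i₀ i₁ i₂ i₃ x y t' u := by
  funext k
  rcases eq_or_ne k i₂ with rfl | hk
  · rw [Function.update_self, Tup_eval₂ h20 h21]
  · rw [Function.update_of_ne hk]
    exact Tup_congr h10 h20 h21 h30 h31 h32 k (fun _ => rfl) (fun _ => rfl)
      (fun h => absurd h hk) (fun _ => rfl)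

theorem Tup_update₃ (h10 : i₁ ≠ i₀) (h20 : i₂ ≠ i₀) (h21 : i₂ ≠ i₁)
    (h30 : i₃ ≠ i₀) (h31 : i₃ ≠ i₁) (h32 : i₃ ≠ i₂)
    (x : X i₀) (y : X i₁) (t : X i₂) (u u' : X i₃) :
    Function.update (Tup e i₀ i₁ i₂ i₃ x y t u) i₃ u' = Tup e i₀ i₁ i₂ i₃ x y t u' := by
  funext k
  rcases eq_or_ne k i₃ with rfl | hk
  · rw [Function.update_self, Tup_eval₃ h30 h31 h32]
  · rw [Function.update_of_ne hk]
    exact Tup_congr h10 h20 h21 h30 h31 h32 k (fun _ => rfl) (fun _ => rfl)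
      (fun _ => rfl) (fun h => absurd h hk)

theorem Tup_self (h10 : i₁ ≠ i₀) (h20 : i₂ ≠ i₀) (h21 : i₂ ≠ i₁)
    (h30 : i₃ ≠ i₀) (h31 : i₃ ≠ i₁) (h32 : i₃ ≠ i₂) :
    Tup e i₀ i₁ i₂ i₃ (e i₀) (e i₁) (e i₂) (e i₃) = e := by
  funext k
  by_cases hk0 : k = i₀
  · subst hk0; rw [Tup_eval₀]
  · by_cases hk1 : k = i₁
    · subst hk1; rw [Tup_eval₁ h10]
    · by_cases hk2 : k = i₂
      · subst hk2; rw [Tup_eval₂ h20 h21]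
      · by_cases hk3 : k = i₃
        · subst hk3; rw [Tup_eval₃ h30 h31 h32]
        · rw [Tup_eval_ne hk0 hk1 hk2 hk3]

/-- Two fiber functions agreeing at a point are equal (via (P2) on `i₀, i₁`). -/
theorem fiber_unique (Q : (∀ i, X i) → Prop) (i₀ i₁ : Fin m) (ne01 : i₀ ≠ i₁)
    (hP2 : ∀ (i j : Fin m), i ≠ j → ∀ (a b a' b' : ∀ k, X k),
      (∀ k, (k = i ∨ k = j) → a k = b k) →
      (∀ k, (k = i ∨ k = j) → a' k = b' k) →
      (∀ k, k ≠ i → k ≠ j → a' k = a k) →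
      (∀ k, k ≠ i → k ≠ j → b' k = b k) →
      Q a → Q b → Q a' → Q b')
    (g h : X i₀ → X i₁)
    (hg : ∃ c : ∀ k, X k, ∀ w : ∀ k, X k,
      (∀ k, k ≠ i₀ → k ≠ i₁ → w k = c k) → (Q w ↔ g (w i₀) = w i₁))
    (hh : ∃ c : ∀ k, X k, ∀ w : ∀ k, X k,
      (∀ k, k ≠ i₀ → k ≠ i₁ → w k = c k) → (Q w ↔ h (w i₀) = w i₁))
    (x₀ : X i₀) (hx : g x₀ = h x₀) : g = h := by
  obtain ⟨cg, hcg⟩ := hg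
  obtain ⟨ch, hch⟩ := hh
  let W : (∀ k, X k) → X i₀ → X i₁ → ∀ k, X k := fun c x y =>
    Function.update (Function.update c i₁ y) i₀ x
  have hW0 : ∀ c x y, W c x y i₀ = x := fun _ _ _ => Function.update_self _ _ _
  have hW1 : ∀ c x y, W c x y i₁ = y := fun c x y => by
    show Function.update (Function.update c i₁ y) i₀ x i₁ = y
    rw [Function.update_of_ne ne01.symm, Function.update_self]
  have hWne : ∀ c x y k, k ≠ i₀ → k ≠ i₁ → W c x y k = c k := fun c x y k h0 h1 => by
    show Function.update (Function.update c i₁ y) i₀ x k = c k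
    rw [Function.update_of_ne h0, Function.update_of_ne h1]
  have hGW : ∀ x y, Q (W cg x y) ↔ g x = y := fun x y => by
    have := hcg (W cg x y) (fun k h0 h1 => hWne _ _ _ _ h0 h1)
    rwa [hW0, hW1] at this
  have hHW : ∀ x y, Q (W ch x y) ↔ h x = y := fun x y => by
    have := hch (W ch x y) (fun k h0 h1 => hWne _ _ _ _ h0 h1)
    rwa [hW0, hW1] at this
  funext x
  have key := hP2 i₀ i₁ ne01 (W cg x₀ (g x₀)) (W ch x₀ (g x₀)) (W cg x (g x)) (W ch x (g x))
    (by rintro k (rfl | rfl) <;> simp only [hW0, hW1])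
    (by rintro k (rfl | rfl) <;> simp only [hW0, hW1])
    (fun k h0 h1 => by rw [hWne _ _ _ _ h0 h1, hWne _ _ _ _ h0 h1])
    (fun k h0 h1 => by rw [hWne _ _ _ _ h0 h1, hWne _ _ _ _ h0 h1])
    ((hGW x₀ (g x₀)).mpr rfl) ((hHW x₀ (g x₀)).mpr hx.symm) ((hGW x (g x)).mpr rfl)
  exact ((hHW x (g x)).mp key).symm

end Statement18Aux

open Statement18Aux in
theorem statement18 {m : ℕ} (hm : 4 ≤ m) {X : Fin m → Type u}
    (Q : (∀ i, X i) → Prop)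
    (i₀ i₁ : Fin m) (h₀ : (i₀ : ℕ) = 0) (h₁ : (i₁ : ℕ) = 1)
    (hP1 : ∀ (i : Fin m) (a : ∀ j, X j), ∃! x : X i, Q (Function.update a i x))
    (hP2 : ∀ (i j : Fin m), i ≠ j → ∀ (a b a' b' : ∀ k, X k),
      (∀ k, (k = i ∨ k = j) → a k = b k) →
      (∀ k, (k = i ∨ k = j) → a' k = b' k) →
      (∀ k, k ≠ i → k ≠ j → a' k = a k) →
      (∀ k, k ≠ i → k ≠ j → b' k = b k) →
      Q a → Q b → Q a' → Q b')
    (e : ∀ k, X k) (hQe : Q e)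
    -- `f₀` is the fiber function through `(e₁,e₂)` determined by `(e₃,…,eₘ)`
    (f₀ : X i₀ → X i₁)
    (hf₀ : ∀ w : ∀ k, X k, (∀ k, k ≠ i₀ → k ≠ i₁ → w k = e k) →
      (Q w ↔ f₀ (w i₀) = w i₁))
    -- `g₀` is a two-sided inverse of `f₀`
    (g₀ : X i₁ → X i₀)
    (hg₀l : ∀ x, g₀ (f₀ x) = x) (hg₀r : ∀ y, f₀ (g₀ y) = y)
    (a : X i₀) (b : X i₁)
    -- `f₁ = π₁(a)`: the unique member of `𝓕` with `f₁ a = e₂`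
    (f₁ : X i₀ → X i₁)
    (hf₁F : ∃ c : ∀ k, X k, ∀ w : ∀ k, X k,
      (∀ k, k ≠ i₀ → k ≠ i₁ → w k = c k) → (Q w ↔ f₁ (w i₀) = w i₁))
    (hf₁a : f₁ a = e i₁)
    -- `f₂ = π₂(b)`: the unique member of `𝓕` with `f₂ e₁ = b`
    (f₂ : X i₀ → X i₁)
    (hf₂F : ∃ c : ∀ k, X k, ∀ w : ∀ k, X k,
      (∀ k, k ≠ i₀ → k ≠ i₁ → w k = c k) → (Q w ↔ f₂ (w i₀) = w i₁))
    (hf₂b : f₂ (e i₀) = b) :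
    -- `π₁(a) + π₂(b) = f₁ ∘ g₀ ∘ f₂` belongs to `𝓕`, sends `a` to `b`,
    -- and is the unique member of `𝓕` doing so
    (∃ c : ∀ k, X k, ∀ w : ∀ k, X k,
      (∀ k, k ≠ i₀ → k ≠ i₁ → w k = c k) →
      (Q w ↔ (f₁ ∘ g₀ ∘ f₂) (w i₀) = w i₁)) ∧
    (f₁ ∘ g₀ ∘ f₂) a = b ∧
    (∀ g : X i₀ → X i₁,
      (∃ c : ∀ k, X k, ∀ w : ∀ k, X k,
        (∀ k, k ≠ i₀ → k ≠ i₁ → w k = c k) → (Q w ↔ g (w i₀) = w i₁)) →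
      g a = b → g = f₁ ∘ g₀ ∘ f₂) := by
  -- two auxiliary coordinates
  set i₂ : Fin m := ⟨2, by omega⟩ with hi₂def
  set i₃ : Fin m := ⟨3, by omega⟩ with hi₃def
  have h₂ : (i₂ : ℕ) = 2 := rfl
  have h₃ : (i₃ : ℕ) = 3 := rfl
  have ne01 : i₀ ≠ i₁ := fun h => by rw [Fin.ext_iff, h₀, h₁] at h; omega
  have h10 : i₁ ≠ i₀ := ne01.symm
  have h20 : i₂ ≠ i₀ := fun h => by rw [Fin.ext_iff, h₂, h₀] at h; omega
  have h21 : i₂ ≠ i₁ := fun h => by rw [Fin.ext_iff, h₂, h₁] at h; omega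
  have h30 : i₃ ≠ i₀ := fun h => by rw [Fin.ext_iff, h₃, h₀] at h; omega
  have h31 : i₃ ≠ i₁ := fun h => by rw [Fin.ext_iff, h₃, h₁] at h; omega
  have h32 : i₃ ≠ i₂ := fun h => by rw [Fin.ext_iff, h₃, h₂] at h; omega
  have ne02 : i₀ ≠ i₂ := h20.symm
  have ne03 : i₀ ≠ i₃ := h30.symm
  -- the two-parameter family of fiber functions
  have hEx : ∀ (t : X i₂) (u : X i₃) (x : X i₀), ∃! y : X i₁, Q (Tup e i₀ i₁ i₂ i₃ x y t u) :=
    fun t u x => by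
      have h := hP1 i₁ (Tup e i₀ i₁ i₂ i₃ x (e i₁) t u)
      simpa only [Tup_update₁ h10 h20 h21 h30 h31 h32] using h
  choose F hF1 hF2 using hEx
  have hQF : ∀ (t : X i₂) (u : X i₃) (x : X i₀) (y : X i₁),
      Q (Tup e i₀ i₁ i₂ i₃ x y t u) ↔ F t u x = y := fun t u x y =>
    ⟨fun h => (hF2 t u x y h).symm, fun h => h ▸ hF1 t u x⟩
  -- every `F t u` is a fiber function in the sense of the statement
  have hFmem : ∀ (t : X i₂) (u : X i₃), ∃ c : ∀ k, X k, ∀ w : ∀ k, X k,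
      (∀ k, k ≠ i₀ → k ≠ i₁ → w k = c k) → (Q w ↔ F t u (w i₀) = w i₁) := by
    intro t u
    refine ⟨Tup e i₀ i₁ i₂ i₃ (e i₀) (e i₁) t u, fun w hw => ?_⟩
    have hwT : w = Tup e i₀ i₁ i₂ i₃ (w i₀) (w i₁) t u := by
      funext k
      by_cases hk0 : k = i₀
      · subst hk0; rw [Tup_eval₀]
      · by_cases hk1 : k = i₁
        · subst hk1; rw [Tup_eval₁ h10]
        · rw [hw k hk0 hk1]
          exact Tup_congr h10 h20 h21 h30 h31 h32 k (fun h => absurd h hk0)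
            (fun h => absurd h hk1) (fun _ => rfl) (fun _ => rfl)
    constructor
    · intro hQw
      exact (hQF t u (w i₀) (w i₁)).mp (by rw [← hwT]; exact hQw)
    · intro hf
      have h2 := (hQF t u (w i₀) (w i₁)).mpr hf
      rwa [← hwT] at h2
  have heT : Tup e i₀ i₁ i₂ i₃ (e i₀) (e i₁) (e i₂) (e i₃) = e :=
    Tup_self h10 h20 h21 h30 h31 h32
  -- `f₀ = F (e i₂) (e i₃)`
  have hf₀e : f₀ (e i₀) = e i₁ := (hf₀ e (fun _ _ _ => rfl)).mp hQe
  have hFe : F (e i₂) (e i₃) (e i₀) = e i₁ :=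
    (hQF (e i₂) (e i₃) (e i₀) (e i₁)).mp (by rw [heT]; exact hQe)
  have hf0eq : f₀ = F (e i₂) (e i₃) :=
    fiber_unique Q i₀ i₁ ne01 hP2 f₀ (F (e i₂) (e i₃)) ⟨e, hf₀⟩
      (hFmem (e i₂) (e i₃)) (e i₀) (hf₀e.trans hFe.symm)
  -- choose `t₁` with `F t₁ (e i₃) = f₁`
  obtain ⟨t₁, ht₁⟩ : ∃ t : X i₂, Q (Tup e i₀ i₁ i₂ i₃ a (e i₁) t (e i₃)) := by
    have h := (hP1 i₂ (Tup e i₀ i₁ i₂ i₃ a (e i₁) (e i₂) (e i₃))).exists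
    simpa only [Tup_update₂ h10 h20 h21 h30 h31 h32] using h
  have hFt₁ : F t₁ (e i₃) a = e i₁ := (hQF _ _ _ _).mp ht₁
  have hf1eq : f₁ = F t₁ (e i₃) :=
    fiber_unique Q i₀ i₁ ne01 hP2 f₁ (F t₁ (e i₃)) hf₁F (hFmem t₁ (e i₃)) a
      (hf₁a.trans hFt₁.symm)
  -- choose `u₂` with `F (e i₂) u₂ = f₂`
  obtain ⟨u₂, hu₂⟩ : ∃ u : X i₃, Q (Tup e i₀ i₁ i₂ i₃ (e i₀) b (e i₂) u) := by
    have h := (hP1 i₃ (Tup e i₀ i₁ i₂ i₃ (e i₀) b (e i₂) (e i₃))).exists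
    simpa only [Tup_update₃ h10 h20 h21 h30 h31 h32] using h
  have hFu₂ : F (e i₂) u₂ (e i₀) = b := (hQF _ _ _ _).mp hu₂
  have hf2eq : f₂ = F (e i₂) u₂ :=
    fiber_unique Q i₀ i₁ ne01 hP2 f₂ (F (e i₂) u₂) hf₂F (hFmem (e i₂) u₂) (e i₀)
      (hf₂b.trans hFu₂.symm)
  -- main composition identity: `F t₁ u₂ = f₁ ∘ g₀ ∘ f₂`
  have key : ∀ x : X i₀, F t₁ u₂ x = f₁ (g₀ (f₂ x)) := by
    intro x
    set y₂ : X i₁ := f₂ x with hy₂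
    set x' : X i₀ := g₀ y₂ with hx'
    set y₁ : X i₁ := f₁ x' with hy₁
    have hA : Q (Tup e i₀ i₁ i₂ i₃ x y₂ (e i₂) u₂) :=
      (hQF _ _ _ _).mpr (by rw [← hf2eq])
    have hB : Q (Tup e i₀ i₁ i₂ i₃ x' y₂ (e i₂) (e i₃)) := by
      refine (hQF _ _ _ _).mpr ?_
      rw [← hf0eq, hx']
      exact hg₀r y₂
    have hC : Q (Tup e i₀ i₁ i₂ i₃ x' y₁ t₁ (e i₃)) :=
      (hQF _ _ _ _).mpr (by rw [← hf1eq])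
    have hD := hP2 i₀ i₃ ne03
      (Tup e i₀ i₁ i₂ i₃ x' y₂ (e i₂) (e i₃)) (Tup e i₀ i₁ i₂ i₃ x' y₁ t₁ (e i₃))
      (Tup e i₀ i₁ i₂ i₃ x y₂ (e i₂) u₂) (Tup e i₀ i₁ i₂ i₃ x y₁ t₁ u₂)
      (by
        rintro k (rfl | rfl)
        · rw [Tup_eval₀, Tup_eval₀]
        · rw [Tup_eval₃ h30 h31 h32, Tup_eval₃ h30 h31 h32])
      (by
        rintro k (rfl | rfl)
        · rw [Tup_eval₀, Tup_eval₀]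
        · rw [Tup_eval₃ h30 h31 h32, Tup_eval₃ h30 h31 h32])
      (fun k hk0 hk3 => Tup_congr h10 h20 h21 h30 h31 h32 k
        (fun h => absurd h hk0) (fun _ => rfl) (fun _ => rfl) (fun h => absurd h hk3))
      (fun k hk0 hk3 => Tup_congr h10 h20 h21 h30 h31 h32 k
        (fun h => absurd h hk0) (fun _ => rfl) (fun _ => rfl) (fun h => absurd h hk3))
      hB hC hA
    exact (hQF t₁ u₂ x y₁).mp hD
  -- evaluation: `F t₁ u₂ a = b`
  have keyA : F t₁ u₂ a = b := by
    have hQa : Q (Tup e i₀ i₁ i₂ i₃ (e i₀) (e i₁) (e i₂) (e i₃)) := by rw [heT]; exact hQe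
    have hD := hP2 i₀ i₂ ne02
      (Tup e i₀ i₁ i₂ i₃ (e i₀) (e i₁) (e i₂) (e i₃)) (Tup e i₀ i₁ i₂ i₃ (e i₀) b (e i₂) u₂)
      (Tup e i₀ i₁ i₂ i₃ a (e i₁) t₁ (e i₃)) (Tup e i₀ i₁ i₂ i₃ a b t₁ u₂)
      (by
        rintro k (rfl | rfl)
        · rw [Tup_eval₀, Tup_eval₀]
        · rw [Tup_eval₂ h20 h21, Tup_eval₂ h20 h21])
      (by
        rintro k (rfl | rfl)
        · rw [Tup_eval₀, Tup_eval₀]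
        · rw [Tup_eval₂ h20 h21, Tup_eval₂ h20 h21])
      (fun k hk0 hk2 => Tup_congr h10 h20 h21 h30 h31 h32 k
        (fun h => absurd h hk0) (fun _ => rfl) (fun h => absurd h hk2) (fun _ => rfl))
      (fun k hk0 hk2 => Tup_congr h10 h20 h21 h30 h31 h32 k
        (fun h => absurd h hk0) (fun _ => rfl) (fun h => absurd h hk2) (fun _ => rfl))
      hQa hu₂ ht₁
    exact (hQF t₁ u₂ a b).mp hD
  have hcomp : f₁ ∘ g₀ ∘ f₂ = F t₁ u₂ := funext fun x => (key x).symm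
  refine ⟨?_, ?_, ?_⟩
  · rw [hcomp]; exact hFmem t₁ u₂
  · show f₁ (g₀ (f₂ a)) = b
    rw [← key a]; exact keyA
  · intro g hgF hga
    rw [hcomp]
    exact fiber_unique Q i₀ i₁ ne01 hP2 g (F t₁ u₂) hgF (hFmem t₁ u₂) a
      (hga.trans keyA.symm)
end
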